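/- arXiv:2104.05771 — 2 statements merged into one kernel-verified Lean document; each statement's English description precedes it below -/
import Mathlib

section
/- Let G = (L, R, E) be a bipartite graph with nonnegative, pairwise-distinct edge weights, and let L' ⊆ L contain each vertex of L independently with probability p = √2 − 1. Consider the greedy-based online algorithm: for each u ∈ L \ L', its candidate edge is the edge incident to u in Greedy(G[L' ∪ {u}]) (if any); the online vertices L \ L' are processed in some order, and a candidate edge (u, r) is added to the output matching M if r is not already matched in M. Then for every rule assigning an arrival order to L \ L', E[w(M)] ≥ (3 − 2√2) · OPT(G). -/
open Finset

open scoped Classical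

/-- Greedy matching with fuel: repeatedly pick the maximum-weight remaining edge and
discard all edges conflicting with it. -/
noncomputable def greedyAux {α : Type*} [DecidableEq α] (w : α → ℝ)
    (conflict : α → α → Prop) : ℕ → Finset α → Finset α
  | 0, _ => ∅
  | n + 1, F =>
    if h : F.Nonempty then
      let e := (F.exists_max_image w h).choose
      insert e (greedyAux w conflict n (F.filter fun f => ¬ conflict e f))
    else ∅

/-- The greedy matching of an edge set `F`: process edges in decreasing order of weight,
adding an edge whenever it conflicts with no previously added edge. -/
noncomputable def greedy {α : Type*} [DecidableEq α] (w : α → ℝ)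
    (conflict : α → α → Prop) (F : Finset α) : Finset α :=
  greedyAux w conflict F.card F

/-- Two edges of a bipartite graph conflict iff they share an endpoint. -/
def bconf {L R : Type*} (e f : L × R) : Prop := e.1 = f.1 ∨ e.2 = f.2

/-- The edge set of the subgraph `G[U ∪ R]` induced by a set `U` of left vertices
(together with the whole right side). -/
def subL {L R : Type*} [DecidableEq L] (E : Finset (L × R)) (U : Finset L) :
    Finset (L × R) :=
  E.filter fun e => e.1 ∈ U

/-- Expectation of `f` over a random subset of `s` containing each element
independently with probability `p`. -/
noncomputable def expSubsets {ι : Type*} (p : ℝ) (s : Finset ι) (f : Finset ι → ℝ) : ℝ :=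
  ∑ A ∈ s.powerset, p ^ A.card * (1 - p) ^ (s.card - A.card) * f A

/-- A set of edges is a matching if no two distinct edges conflict. -/
def isMatching {α : Type*} (conflict : α → α → Prop) (M : Finset α) : Prop :=
  ∀ e ∈ M, ∀ f ∈ M, e ≠ f → ¬ conflict e f

/-- `OPT`: the maximum total weight of a matching contained in the edge set `E`. -/
noncomputable def optWeight {α : Type*} (w : α → ℝ) (conflict : α → α → Prop)
    (E : Finset α) : ℝ :=
  (E.powerset.filter fun M => isMatching conflict M).sup'
    ⟨∅, Finset.mem_filter.mpr ⟨Finset.empty_mem_powerset _,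
        fun e he => absurd he (Finset.notMem_empty e)⟩⟩
    (fun M => ∑ e ∈ M, w e)

/-- One step of the greedy-based online algorithm with sample `L'`: the arriving
vertex `u` gets as candidate the edge incident to `u` in `Greedy(G[L' ∪ {u}])`, and
the candidate edge is added if its right endpoint is not yet matched. -/
noncomputable def stepB {L R : Type*} [DecidableEq L] [DecidableEq R]
    (E : Finset (L × R)) (w : L × R → ℝ) (L' : Finset L)
    (M : Finset (L × R)) (u : L) : Finset (L × R) :=
  M ∪ (greedy w bconf (subL E (insert u L'))).filter
      (fun e => e.1 = u ∧ ∀ f ∈ M, f.2 ≠ e.2)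

/-- The output matching of the greedy-based online algorithm with sample `L'`,
when the online vertices arrive in the order given by `order`. -/
noncomputable def runB {L R : Type*} [DecidableEq L] [DecidableEq R]
    (E : Finset (L × R)) (w : L × R → ℝ) (L' : Finset L) (order : List L) :
    Finset (L × R) :=
  order.foldl (stepB E w L') ∅

section GreedyLemmas

variable {α : Type*} [DecidableEq α] (w : α → ℝ) (conflict : α → α → Prop)

lemma greedyAux_subset : ∀ (n : ℕ) (F : Finset α), greedyAux w conflict n F ⊆ F := by
  intro n
  induction n with
  | zero => intro F; simp [greedyAux]
  | succ n ih =>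
    intro F
    rw [greedyAux]
    split_ifs with h
    · intro x hx
      simp only [Finset.mem_insert] at hx
      rcases hx with rfl | hx
      · exact (F.exists_max_image w h).choose_spec.1
      · exact Finset.filter_subset _ _ (ih _ hx)
    · simp

lemma greedyAux_fuel (hc : ∀ a, conflict a a) :
    ∀ (n : ℕ) (F : Finset α), F.card ≤ n →
      greedyAux w conflict n F = greedyAux w conflict F.card F := by
  intro n
  induction n using Nat.strong_induction_on with
  | _ n ih =>
    intro F hF
    match n with
    | 0 =>
      have h0 : F.card = 0 := Nat.le_zero.mp hF
      rw [h0]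
    | n+1 =>
      by_cases h : F.Nonempty
      · obtain ⟨k, hk⟩ := Nat.exists_eq_succ_of_ne_zero (Finset.card_ne_zero.2 h)
        have hk' : k ≤ n := by omega
        set e := (F.exists_max_image w h).choose with he
        have hmem := (F.exists_max_image w h).choose_spec.1
        set F' := F.filter fun f => ¬ conflict e f with hF'
        have hF'sub : F' ⊆ F.erase e := by
          intro x hx
          simp only [hF', Finset.mem_filter] at hx
          refine Finset.mem_erase.2 ⟨?_, hx.1⟩
          rintro rfl
          exact hx.2 (hc _)
        have hcard' : F'.card ≤ k := by
          have := Finset.card_le_card hF'sub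
          rw [Finset.card_erase_of_mem hmem, hk] at this
          simpa using this
        have e1 : greedyAux w conflict (n+1) F
            = insert e (greedyAux w conflict n F') := by
          rw [greedyAux, dif_pos h]
        have e2 : greedyAux w conflict (k+1) F
            = insert e (greedyAux w conflict k F') := by
          rw [greedyAux, dif_pos h]
        rw [e1, hk, e2]
        congr 1
        rw [ih n (by omega) F' (le_trans hcard' hk'),
            ih k (by omega) F' hcard']
      · rw [Finset.not_nonempty_iff_eq_empty] at h
        subst h
        simp only [Finset.card_empty]
        rw [greedyAux]
        simp [greedyAux]

lemma greedy_subset (F : Finset α) : greedy w conflict F ⊆ F :=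
  greedyAux_subset w conflict _ F

lemma greedy_empty : greedy w conflict (∅ : Finset α) = ∅ := rfl

lemma greedy_eq_fuel (hc : ∀ a, conflict a a) {n : ℕ} {F : Finset α} (hF : F.card ≤ n) :
    greedyAux w conflict n F = greedy w conflict F :=
  greedyAux_fuel w conflict hc n F hF

/-- If `e` is the unique maximum-weight element of `F`, greedy picks `e` first. -/
lemma greedy_eq_insert_max (hc : ∀ a, conflict a a) {F : Finset α} {e : α}
    (he : e ∈ F) (hmax : ∀ f ∈ F, w f ≤ w e)
    (huniq : ∀ f ∈ F, w f = w e → f = e) :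
    greedy w conflict F
      = insert e (greedy w conflict (F.filter fun f => ¬ conflict e f)) := by
  have h : F.Nonempty := ⟨e, he⟩
  obtain ⟨k, hk⟩ := Nat.exists_eq_succ_of_ne_zero (Finset.card_ne_zero.2 h)
  have hchoose : (F.exists_max_image w h).choose = e := by
    obtain ⟨hm, hmax'⟩ := (F.exists_max_image w h).choose_spec
    exact huniq _ hm (le_antisymm (hmax _ hm) (hmax' e he))
  have e1 : greedy w conflict F
      = insert ((F.exists_max_image w h).choose)
          (greedyAux w conflict k (F.filter fun f =>
            ¬ conflict (F.exists_max_image w h).choose f)) := by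
    rw [greedy, hk, greedyAux, dif_pos h]
  rw [e1, hchoose]
  congr 1
  apply greedy_eq_fuel w conflict hc
  have hsub : (F.filter fun f => ¬ conflict e f) ⊆ F.erase e := by
    intro x hx
    simp only [Finset.mem_filter] at hx
    refine Finset.mem_erase.2 ⟨?_, hx.1⟩
    rintro rfl
    exact hx.2 (hc _)
  have := Finset.card_le_card hsub
  rw [Finset.card_erase_of_mem he, hk] at this
  simpa using this

lemma bconf_refl {L R : Type*} : ∀ e : L × R, bconf e e := fun _ => Or.inl rfl

end GreedyLemmas
set_option linter.unusedSectionVars false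

section SubLLemmas

variable {L R : Type*} [Fintype L] [DecidableEq L] [DecidableEq R]

lemma subL_subset (E : Finset (L × R)) (U : Finset L) : subL E U ⊆ E :=
  Finset.filter_subset _ _

lemma mem_subL {E : Finset (L × R)} {U : Finset L} {e : L × R} :
    e ∈ subL E U ↔ e ∈ E ∧ e.1 ∈ U := Finset.mem_filter

lemma subL_empty (U : Finset L) : subL (∅ : Finset (L × R)) U = ∅ := rfl

/-- Decomposition: if `e` is the global max edge and its left endpoint is sampled,
greedy on the induced subgraph picks `e` and then proceeds on the conflict-free rest. -/
lemma greedy_subL_top {E : Finset (L × R)} {w : L × R → ℝ}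
    (hwinj : Set.InjOn w ↑E) {e : L × R} (he : e ∈ E)
    (hmax : ∀ f ∈ E, w f ≤ w e) {S : Finset L} (hz : e.1 ∈ S) :
    greedy w bconf (subL E S)
      = insert e (greedy w bconf (subL (E.filter fun f => ¬ bconf e f) S)) := by
  have h1 : e ∈ subL E S := mem_subL.2 ⟨he, hz⟩
  have hres : (subL E S).filter (fun f => ¬ bconf e f)
      = subL (E.filter fun f => ¬ bconf e f) S := by
    ext f
    simp only [mem_subL, Finset.mem_filter]
    tauto
  rw [greedy_eq_insert_max w bconf bconf_refl h1
      (fun f hf => hmax f (subL_subset _ _ hf))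
      (fun f hf hwf => hwinj (subL_subset _ _ hf) he hwf), hres]

lemma subL_eq_filter_ne {E : Finset (L × R)} {z : L} {S : Finset L} (hz : z ∉ S) :
    subL E S = subL (E.filter fun f => f.1 ≠ z) S := by
  ext f
  simp only [mem_subL, Finset.mem_filter]
  constructor
  · rintro ⟨hf, hfS⟩
    exact ⟨⟨hf, fun h => hz (h ▸ hfS)⟩, hfS⟩
  · rintro ⟨⟨hf, _⟩, hfS⟩
    exact ⟨hf, hfS⟩

lemma subL_congr_of_ne {E' : Finset (L × R)} {z : L} (hE' : ∀ f ∈ E', f.1 ≠ z)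
    {S S' : Finset L} (hSS : ∀ x, x ≠ z → (x ∈ S ↔ x ∈ S')) :
    subL E' S = subL E' S' := by
  ext f
  simp only [mem_subL]
  constructor
  · rintro ⟨hf, hfS⟩; exact ⟨hf, (hSS _ (hE' f hf)).1 hfS⟩
  · rintro ⟨hf, hfS⟩; exact ⟨hf, (hSS _ (hE' f hf)).2 hfS⟩

end SubLLemmas

section RunLemmas

variable {L R : Type*} [Fintype L] [DecidableEq L] [DecidableEq R]
variable {E' : Finset (L × R)} {w : L × R → ℝ} {A : Finset L}

lemma foldl_congr_mem {β : Type*} {l : List β} {f g : Finset (L × R) → β → Finset (L × R)}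
    (h : ∀ M u, u ∈ l → f M u = g M u) :
    ∀ M, l.foldl f M = l.foldl g M := by
  induction l with
  | nil => intro M; rfl
  | cons a l ih =>
    intro M
    simp only [List.foldl_cons]
    rw [h M a List.mem_cons_self]
    exact ih (fun M u hu => h M u (List.mem_cons_of_mem a hu)) _

lemma stepB_subset {M : Finset (L × R)} {u : L} (hM : M ⊆ E') :
    stepB E' w A M u ⊆ E' := by
  intro x hx
  rcases Finset.mem_union.1 hx with hx | hx
  · exact hM hx
  · exact subL_subset _ _ (greedy_subset _ _ _ (Finset.mem_of_mem_filter _ hx))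

lemma run_subset : ∀ (l : List L) (M : Finset (L × R)), M ⊆ E' →
    l.foldl (stepB E' w A) M ⊆ E' := by
  intro l
  induction l with
  | nil => intro M hM; exact hM
  | cons a l ih => intro M hM; exact ih _ (stepB_subset hM)

lemma stepB_filter_card {M : Finset (L × R)} {u : L} {r : R}
    (hM : (M.filter fun f => f.2 = r).card ≤ 1) :
    ((stepB E' w A M u).filter fun f => f.2 = r).card ≤ 1 := by
  by_cases h : ∃ f ∈ M, f.2 = r
  · have : (stepB E' w A M u).filter (fun f => f.2 = r)
        = M.filter fun f => f.2 = r := by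
      unfold stepB
      rw [Finset.filter_union]
      convert Finset.union_empty _
      rw [Finset.filter_eq_empty_iff]
      rintro e he her
      rw [Finset.mem_filter] at he
      obtain ⟨f, hf, hfr⟩ := h
      exact he.2.2 f hf (by rw [hfr, her])
    rw [this]; exact hM
  · push_neg at h
    have : (stepB E' w A M u).filter (fun f => f.2 = r) ⊆ {(u, r)} := by
      intro e he
      rw [Finset.mem_filter] at he
      rcases Finset.mem_union.1 he.1 with hx | hx
      · exact absurd he.2 (h e hx)
      · rw [Finset.mem_filter] at hx
        have : e = (u, r) := Prod.ext hx.2.1 he.2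
        simp [this]
    calc _ ≤ ({(u,r)} : Finset (L × R)).card := Finset.card_le_card this
    _ = 1 := Finset.card_singleton _

lemma run_filter_card {r : R} : ∀ (l : List L) (M : Finset (L × R)),
    (M.filter fun f => f.2 = r).card ≤ 1 →
    ((l.foldl (stepB E' w A) M).filter fun f => f.2 = r).card ≤ 1 := by
  intro l
  induction l with
  | nil => intro M hM; exact hM
  | cons a l ih => intro M hM; exact ih _ (stepB_filter_card hM)

/-- If `E'` contains no edges at left vertex `z`, the arrival of `z` does nothing. -/
lemma stepB_inert {z : L} (hE' : ∀ f ∈ E', f.1 ≠ z) (M : Finset (L × R)) :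
    stepB E' w A M z = M := by
  unfold stepB
  convert Finset.union_empty M
  rw [Finset.filter_eq_empty_iff]
  intro e he
  have : e ∈ E' := subL_subset _ _ (greedy_subset _ _ _ he)
  rintro ⟨h1, _⟩
  exact hE' e this h1

/-- If `E'` contains no edges at left vertex `z`, adding `z` to the sample does nothing. -/
lemma stepB_sample_inert {z : L} (hE' : ∀ f ∈ E', f.1 ≠ z) {B : Finset L}
    (M : Finset (L × R)) (u : L) :
    stepB E' w (insert z B) M u = stepB E' w B M u := by
  unfold stepB
  rw [subL_congr_of_ne hE' (S := insert u (insert z B)) (S' := insert u B)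
    (fun x hx => by simp only [Finset.mem_insert]; tauto)]

end RunLemmas
section Compare

variable {L R : Type*} [Fintype L] [DecidableEq L] [DecidableEq R]

/-- The invariant comparing the true run (with `estar`'s left vertex online) with the
run on the graph without that vertex. -/
def RInv (E : Finset (L × R)) (estar : L × R) (M N : Finset (L × R)) : Prop :=
  M.filter (fun f => ¬ f.2 = estar.2) = N.filter (fun f => ¬ f.2 = estar.2) ∧
  (M.filter (fun f => f.2 = estar.2) = N.filter (fun f => f.2 = estar.2) ∨
    M.filter (fun f => f.2 = estar.2) = {estar}) ∧
  N ⊆ E.filter (fun f => f.1 ≠ estar.1) ∧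
  (N.filter (fun f => f.2 = estar.2)).card ≤ 1

/-- Bonus invariant: nobody ever competes for `estar.2`. -/
def RInvB (estar : L × R) (M N : Finset (L × R)) : Prop :=
  M.filter (fun f => ¬ f.2 = estar.2) = N.filter (fun f => ¬ f.2 = estar.2) ∧
  M.filter (fun f => f.2 = estar.2) = {estar} ∧
  N.filter (fun f => f.2 = estar.2) = ∅

variable {E : Finset (L × R)} {w : L × R → ℝ} {estar : L × R}
variable {A : Finset L}

lemma mem_E1_ne {f : L × R} (hf : f ∈ E.filter (fun f => ¬ bconf estar f)) :
    f.1 ≠ estar.1 ∧ f.2 ≠ estar.2 := by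
  rw [Finset.mem_filter] at hf
  have := hf.2
  unfold bconf at this
  push_neg at this
  exact ⟨fun h => this.1 h.symm, fun h => this.2 h.symm⟩

lemma stepB_z (hE : estar ∈ E) (hwinj : Set.InjOn w ↑E)
    (hmax : ∀ f ∈ E, w f ≤ w estar) (M : Finset (L × R)) :
    stepB E w A M estar.1
      = if (∀ f ∈ M, f.2 ≠ estar.2) then insert estar M else M := by
  unfold stepB
  rw [greedy_subL_top hwinj hE hmax (Finset.mem_insert_self _ _)]
  have hg : ∀ e ∈ greedy w bconf (subL (E.filter fun f => ¬ bconf estar f)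
      (insert estar.1 A)), e.1 ≠ estar.1 :=
    fun e he => (mem_E1_ne (subL_subset _ _ (greedy_subset _ _ _ he))).1
  by_cases hfree : ∀ f ∈ M, f.2 ≠ estar.2
  · rw [if_pos hfree]
    ext f
    simp only [Finset.mem_union, Finset.mem_filter, Finset.mem_insert]
    constructor
    · rintro (hf | ⟨rfl | hf, h1, h2⟩)
      · exact Or.inr hf
      · exact Or.inl rfl
      · exact absurd h1 (hg f hf)
    · rintro (rfl | hf)
      · exact Or.inr ⟨Or.inl rfl, rfl, hfree⟩
      · exact Or.inl hf
  · rw [if_neg hfree]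
    ext f
    simp only [Finset.mem_union, Finset.mem_filter, Finset.mem_insert]
    constructor
    · rintro (hf | ⟨rfl | hf, h1, h2⟩)
      · exact hf
      · exact absurd h2 hfree
      · exact absurd h1 (hg f hf)
    · exact fun hf => Or.inl hf

lemma stepB_eq₂ (hzA : estar.1 ∉ A) {u : L} (hu : u ≠ estar.1) (M : Finset (L × R)) :
    stepB E w A M u = stepB (E.filter fun f => f.1 ≠ estar.1) w A M u := by
  unfold stepB
  rw [subL_eq_filter_ne (z := estar.1) (by
    simp only [Finset.mem_insert, not_or]
    exact ⟨fun h => hu h.symm, hzA⟩)]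

lemma free_iff_ne {M N : Finset (L × R)} (h1 : M.filter (fun f => ¬ f.2 = estar.2)
      = N.filter (fun f => ¬ f.2 = estar.2)) {e : L × R}
    (hne : ¬ e.2 = estar.2) :
    (∀ f ∈ M, f.2 ≠ e.2) ↔ (∀ f ∈ N, f.2 ≠ e.2) := by
  constructor
  · intro hf f hfN heq
    have : f ∈ M.filter (fun f => ¬ f.2 = estar.2) := by
      rw [h1]; exact Finset.mem_filter.2 ⟨hfN, by rw [heq]; exact hne⟩
    exact hf f (Finset.mem_filter.1 this).1 heq
  · intro hf f hfM heq
    have : f ∈ N.filter (fun f => ¬ f.2 = estar.2) := by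
      rw [← h1]; exact Finset.mem_filter.2 ⟨hfM, by rw [heq]; exact hne⟩
    exact hf f (Finset.mem_filter.1 this).1 heq

lemma inv_step (hzA : estar.1 ∉ A) {u : L} (hu : u ≠ estar.1)
    {M N : Finset (L × R)} (h : RInv E estar M N) :
    RInv E estar (stepB E w A M u)
      (stepB (E.filter fun f => f.1 ≠ estar.1) w A N u) := by
  obtain ⟨h1, h2, h3, h4⟩ := h
  rw [stepB_eq₂ hzA hu]
  set C := greedy w bconf (subL (E.filter fun f => f.1 ≠ estar.1) (insert u A)) with hC
  have hM : stepB (E.filter fun f => f.1 ≠ estar.1) w A M u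
      = M ∪ C.filter (fun e => e.1 = u ∧ ∀ f ∈ M, f.2 ≠ e.2) := rfl
  have hN : stepB (E.filter fun f => f.1 ≠ estar.1) w A N u
      = N ∪ C.filter (fun e => e.1 = u ∧ ∀ f ∈ N, f.2 ≠ e.2) := rfl
  rw [hM, hN]
  refine ⟨?_, ?_, ?_, ?_⟩
  · rw [Finset.filter_union, Finset.filter_union, h1]
    congr 1
    ext e
    simp only [Finset.mem_filter]
    constructor
    · rintro ⟨⟨heC, heu, hfree⟩, hne⟩
      exact ⟨⟨heC, heu, (free_iff_ne h1 hne).1 hfree⟩, hne⟩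
    · rintro ⟨⟨heC, heu, hfree⟩, hne⟩
      exact ⟨⟨heC, heu, (free_iff_ne h1 hne).2 hfree⟩, hne⟩
  · rcases h2 with h2 | h2
    · left
      rw [Finset.filter_union, Finset.filter_union, h2]
      congr 1
      ext e
      simp only [Finset.mem_filter]
      have key : ∀ e : L × R, e.2 = estar.2 →
          ((∀ f ∈ M, f.2 ≠ e.2) ↔ (∀ f ∈ N, f.2 ≠ e.2)) := by
        intro e heq
        constructor
        · intro hf f hfN hfe
          have : f ∈ N.filter (fun f => f.2 = estar.2) :=
            Finset.mem_filter.2 ⟨hfN, by rw [hfe, heq]⟩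
          rw [← h2] at this
          exact hf f (Finset.mem_filter.1 this).1 hfe
        · intro hf f hfM hfe
          have : f ∈ M.filter (fun f => f.2 = estar.2) :=
            Finset.mem_filter.2 ⟨hfM, by rw [hfe, heq]⟩
          rw [h2] at this
          exact hf f (Finset.mem_filter.1 this).1 hfe
      constructor
      · rintro ⟨⟨heC, heu, hfree⟩, heq⟩
        exact ⟨⟨heC, heu, (key e heq).1 hfree⟩, heq⟩
      · rintro ⟨⟨heC, heu, hfree⟩, heq⟩
        exact ⟨⟨heC, heu, (key e heq).2 hfree⟩, heq⟩
    · right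
      rw [Finset.filter_union, h2]
      have hestar : estar ∈ M := by
        have h5 : estar ∈ M.filter (fun f => f.2 = estar.2) := by
          rw [h2]; exact Finset.mem_singleton_self _
        exact (Finset.mem_filter.1 h5).1
      ext f
      simp only [Finset.mem_union, Finset.mem_singleton, Finset.mem_filter]
      constructor
      · rintro (rfl | ⟨⟨hfC, hfu, hfree⟩, heq⟩)
        · rfl
        · exact absurd heq.symm (hfree estar hestar)
      · rintro rfl
        exact Or.inl rfl
  · intro x hx
    rcases Finset.mem_union.1 hx with hx | hx
    · exact h3 hx
    · exact subL_subset _ _ (greedy_subset _ _ _ (Finset.mem_of_mem_filter _ hx))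
  · have := stepB_filter_card (E' := E.filter fun f => f.1 ≠ estar.1)
      (w := w) (A := A) (u := u) (r := estar.2) h4
    exact this

lemma inv_fold (hzA : estar.1 ∉ A) :
    ∀ (l : List L), (∀ u ∈ l, u ≠ estar.1) →
    ∀ {M N : Finset (L × R)}, RInv E estar M N →
    RInv E estar (l.foldl (stepB E w A) M)
      (l.foldl (stepB (E.filter fun f => f.1 ≠ estar.1) w A) N) := by
  intro l
  induction l with
  | nil => intro _ M N h; exact h
  | cons a l ih =>
    intro hl M N h
    simp only [List.foldl_cons]
    exact ih (fun u hu => hl u (List.mem_cons_of_mem a hu))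
      (inv_step hzA (hl a List.mem_cons_self) h)

lemma inv_weight (hE : estar ∈ E) (hw0 : ∀ e ∈ E, 0 ≤ w e)
    (hmax : ∀ f ∈ E, w f ≤ w estar) {M N : Finset (L × R)} (h : RInv E estar M N) :
    ∑ e ∈ N, w e ≤ ∑ e ∈ M, w e := by
  obtain ⟨h1, h2, h3, h4⟩ := h
  rw [← Finset.sum_filter_add_sum_filter_not M (fun f => f.2 = estar.2) w,
      ← Finset.sum_filter_add_sum_filter_not N (fun f => f.2 = estar.2) w, h1]
  have hfin : ∑ e ∈ N.filter (fun f => f.2 = estar.2), w e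
      ≤ ∑ e ∈ M.filter (fun f => f.2 = estar.2), w e := by
    rcases h2 with h2 | h2
    · rw [h2]
    · rw [h2, Finset.sum_singleton]
      haveI : Nonempty (L × R) := ⟨estar⟩
      obtain ⟨x, hx⟩ := Finset.card_le_one_iff_subset_singleton.1 h4
      rcases Finset.subset_singleton_iff.1 hx with h0 | h0
      · rw [h0, Finset.sum_empty]; exact hw0 estar hE
      · rw [h0, Finset.sum_singleton]
        have hxN : x ∈ N := (Finset.mem_filter.1 (h0 ▸ Finset.mem_singleton_self x)).1
        exact hmax x (Finset.mem_of_mem_filter _ (h3 hxN))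
  linarith

lemma invB_step (hzA : estar.1 ∉ A) {u : L} (hu : u ≠ estar.1)
    (hno : (u, estar.2) ∉ greedy w bconf
      (subL (E.filter fun f => f.1 ≠ estar.1) (insert u A)))
    {M N : Finset (L × R)} (h : RInvB estar M N) :
    RInvB estar (stepB E w A M u)
      (stepB (E.filter fun f => f.1 ≠ estar.1) w A N u) := by
  obtain ⟨h1, h2, h3⟩ := h
  rw [stepB_eq₂ hzA hu]
  set C := greedy w bconf (subL (E.filter fun f => f.1 ≠ estar.1) (insert u A)) with hC
  have hM : stepB (E.filter fun f => f.1 ≠ estar.1) w A M u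
      = M ∪ C.filter (fun e => e.1 = u ∧ ∀ f ∈ M, f.2 ≠ e.2) := rfl
  have hN : stepB (E.filter fun f => f.1 ≠ estar.1) w A N u
      = N ∪ C.filter (fun e => e.1 = u ∧ ∀ f ∈ N, f.2 ≠ e.2) := rfl
  rw [hM, hN]
  refine ⟨?_, ?_, ?_⟩
  · rw [Finset.filter_union, Finset.filter_union, h1]
    congr 1
    ext e
    simp only [Finset.mem_filter]
    constructor
    · rintro ⟨⟨heC, heu, hfree⟩, hne⟩
      exact ⟨⟨heC, heu, (free_iff_ne h1 hne).1 hfree⟩, hne⟩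
    · rintro ⟨⟨heC, heu, hfree⟩, hne⟩
      exact ⟨⟨heC, heu, (free_iff_ne h1 hne).2 hfree⟩, hne⟩
  · rw [Finset.filter_union, h2]
    have hestar : estar ∈ M := by
      have h5 : estar ∈ M.filter (fun f => f.2 = estar.2) := by
        rw [h2]; exact Finset.mem_singleton_self _
      exact (Finset.mem_filter.1 h5).1
    ext f
    simp only [Finset.mem_union, Finset.mem_singleton, Finset.mem_filter]
    constructor
    · rintro (rfl | ⟨⟨hfC, hfu, hfree⟩, heq⟩)
      · rfl
      · exact absurd heq.symm (hfree estar hestar)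
    · rintro rfl
      exact Or.inl rfl
  · rw [Finset.filter_union, h3, Finset.empty_union, Finset.filter_eq_empty_iff]
    rintro e he heq
    rw [Finset.mem_filter] at he
    have he' : e = (u, estar.2) := Prod.ext_iff.mpr ⟨he.2.1, heq⟩
    rw [he'] at he
    exact hno he.1

lemma invB_fold (hzA : estar.1 ∉ A) :
    ∀ (l : List L), (∀ u ∈ l, u ≠ estar.1 ∧ (u, estar.2) ∉ greedy w bconf
      (subL (E.filter fun f => f.1 ≠ estar.1) (insert u A))) →
    ∀ {M N : Finset (L × R)}, RInvB estar M N →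
    RInvB estar (l.foldl (stepB E w A) M)
      (l.foldl (stepB (E.filter fun f => f.1 ≠ estar.1) w A) N) := by
  intro l
  induction l with
  | nil => intro _ M N h; exact h
  | cons a l ih =>
    intro hl M N h
    simp only [List.foldl_cons]
    exact ih (fun u hu => hl u (List.mem_cons_of_mem a hu))
      (invB_step hzA (hl a List.mem_cons_self).1
        (hl a List.mem_cons_self).2 h)

lemma invB_weight {M N : Finset (L × R)} (h : RInvB estar M N) :
    ∑ e ∈ M, w e = ∑ e ∈ N, w e + w estar := by
  obtain ⟨h1, h2, h3⟩ := h
  rw [← Finset.sum_filter_add_sum_filter_not M (fun f => f.2 = estar.2) w,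
      ← Finset.sum_filter_add_sum_filter_not N (fun f => f.2 = estar.2) w,
      h1, h2, h3, Finset.sum_singleton, Finset.sum_empty]
  ring

lemma run_no_rho (hzA : estar.1 ∉ A) :
    ∀ (l : List L), (∀ u ∈ l, (u, estar.2) ∉ greedy w bconf
      (subL (E.filter fun f => f.1 ≠ estar.1) (insert u A))) →
    ∀ (N : Finset (L × R)), N.filter (fun f => f.2 = estar.2) = ∅ →
    ((l.foldl (stepB (E.filter fun f => f.1 ≠ estar.1) w A) N).filter
      (fun f => f.2 = estar.2)) = ∅ := by
  intro l
  induction l with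
  | nil => intro _ N hN; exact hN
  | cons a l ih =>
    intro hl N hN
    simp only [List.foldl_cons]
    apply ih (fun u hu => hl u (List.mem_cons_of_mem a hu))
    show ((stepB (E.filter fun f => f.1 ≠ estar.1) w A N a).filter
      (fun f => f.2 = estar.2)) = ∅
    unfold stepB
    rw [Finset.filter_union, hN]
    rw [Finset.empty_union, Finset.filter_eq_empty_iff]
    rintro e he heq
    rw [Finset.mem_filter] at he
    have : e = (a, estar.2) := Prod.ext_iff.mpr ⟨he.2.1, heq⟩
    rw [this] at he
    exact hl a List.mem_cons_self he.1

/-- The main comparison: the run on `E` with `estar.1` online is at least the run on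
`E` minus `estar.1`'s edges, plus `w estar` if nobody competes for `estar.2`. -/
lemma cmpRun (hE : estar ∈ E) (hw0 : ∀ e ∈ E, 0 ≤ w e) (hwinj : Set.InjOn w ↑E)
    (hmax : ∀ f ∈ E, w f ≤ w estar) (hzA : estar.1 ∉ A)
    (ord : List L) (hnd : ord.Nodup) (hz : estar.1 ∈ ord) :
    ∑ e ∈ ord.foldl (stepB E w A) ∅, w e ≥
      (∑ e ∈ (ord.erase estar.1).foldl
        (stepB (E.filter fun f => f.1 ≠ estar.1) w A) ∅, w e)
      + (if (∀ u ∈ ord, (u, estar.2) ∉ greedy w bconf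
          (subL (E.filter fun f => f.1 ≠ estar.1) (insert u A))) then w estar else 0) := by
  obtain ⟨l₁, l₂, rfl⟩ := List.append_of_mem hz
  have hz1 : estar.1 ∉ l₁ := by
    intro hmem
    have := List.disjoint_of_nodup_append hnd
    exact this hmem List.mem_cons_self
  have hz2 : estar.1 ∉ l₂ := by
    have := (List.nodup_append.1 hnd).2.1
    exact (List.nodup_cons.1 this).1
  have herase : (l₁ ++ estar.1 :: l₂).erase estar.1 = l₁ ++ l₂ := by
    rw [List.erase_append_right _ hz1, List.erase_cons_head]
  rw [herase]
  have hstep_eq : ∀ (M : Finset (L × R)) (u : L), u ∈ l₁ →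
      stepB E w A M u = stepB (E.filter fun f => f.1 ≠ estar.1) w A M u := by
    intro M u hu
    exact stepB_eq₂ hzA (fun h => hz1 (h ▸ hu)) M
  have hM0 : (l₁ ++ estar.1 :: l₂).foldl (stepB E w A) ∅
      = l₂.foldl (stepB E w A)
        (stepB E w A (l₁.foldl (stepB (E.filter fun f => f.1 ≠ estar.1) w A) ∅) estar.1) := by
    rw [List.foldl_append, List.foldl_cons, foldl_congr_mem hstep_eq]
  have hN0 : (l₁ ++ l₂).foldl (stepB (E.filter fun f => f.1 ≠ estar.1) w A) ∅
      = l₂.foldl (stepB (E.filter fun f => f.1 ≠ estar.1) w A)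
        (l₁.foldl (stepB (E.filter fun f => f.1 ≠ estar.1) w A) ∅) := by
    rw [List.foldl_append]
  set M0 := l₁.foldl (stepB (E.filter fun f => f.1 ≠ estar.1) w A) ∅ with hM0def
  rw [hM0, hN0]
  by_cases hbonus : ∀ u ∈ l₁ ++ estar.1 :: l₂, (u, estar.2) ∉ greedy w bconf
      (subL (E.filter fun f => f.1 ≠ estar.1) (insert u A))
  · rw [if_pos hbonus]
    have hM0rho : M0.filter (fun f => f.2 = estar.2) = ∅ := by
      apply run_no_rho hzA l₁
      · intro u hu
        exact hbonus u (List.mem_append_left _ hu)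
      · simp
    have hfree : ∀ f ∈ M0, f.2 ≠ estar.2 := by
      intro f hf heq
      have : f ∈ M0.filter (fun f => f.2 = estar.2) := Finset.mem_filter.2 ⟨hf, heq⟩
      rw [hM0rho] at this
      exact absurd this (Finset.notMem_empty f)
    have hzstep : stepB E w A M0 estar.1 = insert estar M0 := by
      rw [stepB_z hE hwinj hmax, if_pos hfree]
    rw [hzstep]
    have hinvB : RInvB estar (insert estar M0) M0 := by
      refine ⟨?_, ?_, hM0rho⟩
      · rw [Finset.filter_insert, if_neg (by simp)]
      · rw [Finset.filter_insert, if_pos rfl, hM0rho]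
        simp
    have hfinal := invB_fold (w := w) hzA l₂
      (fun u hu => ⟨fun h => hz2 (h ▸ hu), hbonus u
        (List.mem_append_right _ (List.mem_cons_of_mem _ hu))⟩) hinvB
    rw [invB_weight hfinal]
  · rw [if_neg hbonus]
    have hinv0 : RInv E estar (stepB E w A M0 estar.1) M0 := by
      have hM0sub : M0 ⊆ E.filter (fun f => f.1 ≠ estar.1) :=
        run_subset l₁ ∅ (Finset.empty_subset _)
      have hM0card : (M0.filter (fun f => f.2 = estar.2)).card ≤ 1 :=
        run_filter_card l₁ ∅ (by simp)
      rw [stepB_z hE hwinj hmax]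
      by_cases hfree : ∀ f ∈ M0, f.2 ≠ estar.2
      · rw [if_pos hfree]
        refine ⟨?_, Or.inr ?_, hM0sub, hM0card⟩
        · rw [Finset.filter_insert, if_neg (by simp)]
        · rw [Finset.filter_insert, if_pos rfl]
          have : M0.filter (fun f => f.2 = estar.2) = ∅ := by
            rw [Finset.filter_eq_empty_iff]
            exact fun f hf => hfree f hf
          rw [this]
          simp
      · rw [if_neg hfree]
        exact ⟨rfl, Or.inl rfl, hM0sub, hM0card⟩
    have hfinal := inv_fold (w := w) hzA l₂ (fun u hu h => hz2 (h ▸ hu)) hinv0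
    have := inv_weight hE hw0 hmax hfinal
    linarith

end Compare
section ExpLemmas

variable {ι : Type*} [DecidableEq ι]

lemma insert_injOn_powerset {z : ι} {s : Finset ι} :
    ∀ B ∈ (s.erase z).powerset, ∀ B' ∈ (s.erase z).powerset,
      insert z B = insert z B' → B = B' := by
  intro B hB B' hB' h
  rw [Finset.mem_powerset] at hB hB'
  have hzB : z ∉ B := fun hh => (Finset.notMem_erase z s) (hB hh)
  have hzB' : z ∉ B' := fun hh => (Finset.notMem_erase z s) (hB' hh)
  rw [← Finset.erase_insert hzB, h, Finset.erase_insert hzB']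

lemma disjoint_powerset_image {z : ι} {s : Finset ι} :
    Disjoint ((s.erase z).powerset)
      (((s.erase z).powerset).image (insert z)) := by
  rw [Finset.disjoint_right]
  intro B hB hB'
  rw [Finset.mem_image] at hB
  obtain ⟨B', _, rfl⟩ := hB
  rw [Finset.mem_powerset] at hB'
  exact (Finset.notMem_erase z s) (hB' (Finset.mem_insert_self z B'))

lemma split_powerset {z : ι} {s : Finset ι} (hz : z ∈ s) (f : Finset ι → ℝ) :
    ∑ A ∈ s.powerset, f A
      = ∑ B ∈ (s.erase z).powerset, (f B + f (insert z B)) := by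
  conv_lhs => rw [← Finset.insert_erase hz]
  rw [Finset.powerset_insert, Finset.sum_union disjoint_powerset_image,
    Finset.sum_image insert_injOn_powerset, ← Finset.sum_add_distrib]

/-- The key splitting of the expectation over random subsets according to the
membership of a fixed element `z`. -/
lemma expSubsets_split {p : ℝ} {z : ι} {s : Finset ι} (hz : z ∈ s)
    (v : Finset ι → ℝ) :
    expSubsets p s v
      = ∑ B ∈ (s.erase z).powerset,
          p ^ B.card * (1 - p) ^ ((s.erase z).card - B.card)
            * ((1 - p) * v B + p * v (insert z B)) := by
  unfold expSubsets
  rw [split_powerset hz]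
  apply Finset.sum_congr rfl
  intro B hB
  rw [Finset.mem_powerset] at hB
  have hzB : z ∉ B := fun hh => (Finset.notMem_erase z s) (hB hh)
  have hcard : B.card ≤ (s.erase z).card := Finset.card_le_card hB
  have h1 : s.card = (s.erase z).card + 1 := by
    rw [Finset.card_erase_of_mem hz]
    have : 1 ≤ s.card := Finset.card_pos.2 ⟨z, hz⟩
    omega
  have h2 : (insert z B).card = B.card + 1 := Finset.card_insert_of_notMem hzB
  have h3 : s.card - B.card = ((s.erase z).card - B.card) + 1 := by omega
  have h4 : s.card - (B.card + 1) = (s.erase z).card - B.card := by omega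
  rw [h2, h3, h4, pow_succ]
  ring

lemma sum_pow_powerset (p : ℝ) (s : Finset ι) :
    ∑ B ∈ s.powerset, p ^ B.card * (1 - p) ^ (s.card - B.card) = 1 := by
  induction s using Finset.induction_on with
  | empty => simp
  | @insert a s ha ih =>
    have hz : a ∈ insert a s := Finset.mem_insert_self a s
    rw [split_powerset hz, Finset.erase_insert ha]
    have : ∀ B ∈ s.powerset,
        p ^ B.card * (1 - p) ^ ((insert a s).card - B.card)
          + p ^ (insert a B).card * (1 - p) ^ ((insert a s).card - (insert a B).card)
        = p ^ B.card * (1 - p) ^ (s.card - B.card) := by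
      intro B hB
      rw [Finset.mem_powerset] at hB
      have haB : a ∉ B := fun hh => ha (hB hh)
      have hcard : B.card ≤ s.card := Finset.card_le_card hB
      rw [Finset.card_insert_of_notMem haB, Finset.card_insert_of_notMem ha]
      have h3 : s.card + 1 - B.card = (s.card - B.card) + 1 := by omega
      have h4 : s.card + 1 - (B.card + 1) = s.card - B.card := by omega
      rw [h3, h4, pow_succ, pow_succ]
      ring
    rw [Finset.sum_congr rfl this, ih]

/-- If `v` does not depend on the membership of `z`, the expectation collapses to the
expectation over subsets of `s.erase z`. -/
lemma expSubsets_zindep {p : ℝ} {z : ι} {s : Finset ι} (hz : z ∈ s)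
    {v : Finset ι → ℝ} (hv : ∀ B ∈ (s.erase z).powerset, v (insert z B) = v B) :
    expSubsets p s v
      = ∑ B ∈ (s.erase z).powerset,
          p ^ B.card * (1 - p) ^ ((s.erase z).card - B.card) * v B := by
  rw [expSubsets_split hz]
  apply Finset.sum_congr rfl
  intro B hB
  rw [hv B hB]
  ring

end ExpLemmas

section OptLemmas

variable {L R : Type*} [Fintype L] [DecidableEq L] [DecidableEq R]
variable {E : Finset (L × R)} {w : L × R → ℝ}

lemma optWeight_nonneg : 0 ≤ optWeight w bconf E := by
  unfold optWeight
  have hemp : (∅ : Finset (L × R)) ∈ E.powerset.filter (fun M => isMatching bconf M) :=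
    Finset.mem_filter.mpr ⟨Finset.empty_mem_powerset _,
      fun e he => absurd he (Finset.notMem_empty e)⟩
  have := Finset.le_sup' (fun M : Finset (L × R) => ∑ e ∈ M, w e) hemp
  simpa using this

lemma sum_matching_le_opt {M : Finset (L × R)} (hM : M ⊆ E)
    (hmatch : isMatching bconf M) :
    ∑ e ∈ M, w e ≤ optWeight w bconf E := by
  unfold optWeight
  exact Finset.le_sup' (fun M : Finset (L × R) => ∑ e ∈ M, w e)
    (Finset.mem_filter.mpr ⟨Finset.mem_powerset.2 hM, hmatch⟩)

lemma matching_filter_card_le_one_left {M : Finset (L × R)}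
    (hmatch : isMatching bconf M) (x : L) :
    (M.filter (fun f => f.1 = x)).card ≤ 1 := by
  rw [Finset.card_le_one]
  intro a ha b hb
  rw [Finset.mem_filter] at ha hb
  by_contra hne
  exact hmatch a ha.1 b hb.1 hne (Or.inl (ha.2.trans hb.2.symm))

lemma matching_filter_card_le_one_right {M : Finset (L × R)}
    (hmatch : isMatching bconf M) (y : R) :
    (M.filter (fun f => f.2 = y)).card ≤ 1 := by
  rw [Finset.card_le_one]
  intro a ha b hb
  rw [Finset.mem_filter] at ha hb
  by_contra hne
  exact hmatch a ha.1 b hb.1 hne (Or.inr (ha.2.trans hb.2.symm))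

/-- Removing everything conflicting with the max edge costs at most `2 * w estar`. -/
lemma opt_le_opt_filter_bconf {estar : L × R} (hE : estar ∈ E)
    (hw0 : ∀ e ∈ E, 0 ≤ w e) (hmax : ∀ f ∈ E, w f ≤ w estar) :
    optWeight w bconf E
      ≤ 2 * w estar + optWeight w bconf (E.filter fun f => ¬ bconf estar f) := by
  unfold optWeight
  apply Finset.sup'_le
  intro M hM
  rw [Finset.mem_filter, Finset.mem_powerset] at hM
  obtain ⟨hME, hmatch⟩ := hM
  rw [← Finset.sum_filter_add_sum_filter_not M (fun f => bconf estar f) w]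
  have hpart1 : ∑ e ∈ M.filter (fun f => bconf estar f), w e ≤ 2 * w estar := by
    have hsub : M.filter (fun f => bconf estar f)
        ⊆ M.filter (fun f => f.1 = estar.1) ∪ M.filter (fun f => f.2 = estar.2) := by
      intro f hf
      rw [Finset.mem_filter] at hf
      rcases hf.2 with h | h
      · exact Finset.mem_union_left _ (Finset.mem_filter.2 ⟨hf.1, h.symm⟩)
      · exact Finset.mem_union_right _ (Finset.mem_filter.2 ⟨hf.1, h.symm⟩)
    have hcard : (M.filter (fun f => bconf estar f)).card ≤ 2 := by
      calc (M.filter (fun f => bconf estar f)).card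
          ≤ (M.filter (fun f => f.1 = estar.1) ∪ M.filter (fun f => f.2 = estar.2)).card :=
            Finset.card_le_card hsub
        _ ≤ (M.filter (fun f => f.1 = estar.1)).card
            + (M.filter (fun f => f.2 = estar.2)).card := Finset.card_union_le _ _
        _ ≤ 1 + 1 := Nat.add_le_add (matching_filter_card_le_one_left hmatch _)
            (matching_filter_card_le_one_right hmatch _)
    calc ∑ e ∈ M.filter (fun f => bconf estar f), w e
        ≤ (M.filter (fun f => bconf estar f)).card • w estar := by
          apply Finset.sum_le_card_nsmul
          intro x hx
          exact hmax x (hME (Finset.mem_of_mem_filter _ hx))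
      _ ≤ 2 • w estar := by
          apply nsmul_le_nsmul_left (hw0 estar hE) hcard
      _ = 2 * w estar := by
          rw [nsmul_eq_mul]; norm_num
  have hpart2 : ∑ e ∈ M.filter (fun f => ¬ bconf estar f), w e
      ≤ optWeight w bconf (E.filter fun f => ¬ bconf estar f) := by
    apply sum_matching_le_opt
    · intro f hf
      rw [Finset.mem_filter] at hf ⊢
      exact ⟨hME hf.1, hf.2⟩
    · intro e he f hf hne
      exact hmatch e (Finset.mem_of_mem_filter _ he) f (Finset.mem_of_mem_filter _ hf) hne
  unfold optWeight at hpart2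
  linarith

/-- Removing the edges at the left vertex `estar.1` costs at most `w estar`. -/
lemma opt_le_opt_filter_left {estar : L × R} (hE : estar ∈ E)
    (hw0 : ∀ e ∈ E, 0 ≤ w e) (hmax : ∀ f ∈ E, w f ≤ w estar) :
    optWeight w bconf E
      ≤ w estar + optWeight w bconf (E.filter fun f => f.1 ≠ estar.1) := by
  unfold optWeight
  apply Finset.sup'_le
  intro M hM
  rw [Finset.mem_filter, Finset.mem_powerset] at hM
  obtain ⟨hME, hmatch⟩ := hM
  rw [← Finset.sum_filter_add_sum_filter_not M (fun f => f.1 = estar.1) w]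
  have hpart1 : ∑ e ∈ M.filter (fun f => f.1 = estar.1), w e ≤ w estar := by
    calc ∑ e ∈ M.filter (fun f => f.1 = estar.1), w e
        ≤ (M.filter (fun f => f.1 = estar.1)).card • w estar := by
          apply Finset.sum_le_card_nsmul
          intro x hx
          exact hmax x (hME (Finset.mem_of_mem_filter _ hx))
      _ ≤ 1 • w estar := by
          apply nsmul_le_nsmul_left (hw0 estar hE)
            (matching_filter_card_le_one_left hmatch _)
      _ = w estar := one_nsmul _
  have hpart2 : ∑ e ∈ M.filter (fun f => ¬ f.1 = estar.1), w e
      ≤ optWeight w bconf (E.filter fun f => f.1 ≠ estar.1) := by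
    apply sum_matching_le_opt
    · intro f hf
      rw [Finset.mem_filter] at hf ⊢
      exact ⟨hME hf.1, hf.2⟩
    · intro e he f hf hne
      exact hmatch e (Finset.mem_of_mem_filter _ he) f (Finset.mem_of_mem_filter _ hf) hne
  unfold optWeight at hpart2
  linarith

end OptLemmas
section ClaimP

variable {L R : Type*} [Fintype L] [DecidableEq L] [DecidableEq R]

/-- Key probabilistic claim: for any right vertex `r`, with probability at least `p`
no online vertex has a candidate edge at `r`. -/
theorem claimP (p : ℝ) (hp0 : 0 ≤ p) (hp1 : p ≤ 1) :
    ∀ (n : ℕ) (E : Finset (L × R)) (w : L × R → ℝ), E.card ≤ n → Set.InjOn w ↑E →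
    ∀ r : R, p ≤ expSubsets p Finset.univ
      (fun A => if (∀ u, u ∉ A → (u, r) ∉ greedy w bconf (subL E (insert u A)))
        then (1:ℝ) else 0) := by
  intro n
  induction n with
  | zero =>
    intro E w hcard _ r
    have hE : E = ∅ := Finset.card_eq_zero.1 (Nat.le_zero.1 hcard)
    subst hE
    have hone : ∀ A ∈ (Finset.univ : Finset L).powerset,
        p ^ A.card * (1 - p) ^ ((Finset.univ : Finset L).card - A.card) *
          (if (∀ u, u ∉ A → (u, r) ∉ greedy w bconf (subL (∅ : Finset (L × R))
            (insert u A))) then (1:ℝ) else 0)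
        = p ^ A.card * (1 - p) ^ ((Finset.univ : Finset L).card - A.card) := by
      intro A _
      rw [if_pos, mul_one]
      intro u _ hmem
      rw [subL_empty, greedy_empty] at hmem
      exact absurd hmem (Finset.notMem_empty _)
    have heq1 : expSubsets p Finset.univ
        (fun A => if (∀ u, u ∉ A → (u, r) ∉ greedy w bconf (subL (∅ : Finset (L × R))
          (insert u A))) then (1:ℝ) else 0) = 1 := by
      unfold expSubsets
      rw [Finset.sum_congr rfl hone]
      exact sum_pow_powerset p _
    rw [heq1]
    exact hp1
  | succ n ih =>
    intro E w hcard hwinj r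
    by_cases hne : E.Nonempty
    swap
    · rw [Finset.not_nonempty_iff_eq_empty] at hne
      exact ih E w (by simp [hne]) hwinj r
    obtain ⟨emax, hemaxE, hmax⟩ := Finset.exists_max_image E w hne
    have hzuniv : emax.1 ∈ (Finset.univ : Finset L) := Finset.mem_univ _
    -- cardinalities of the two reduced graphs
    have hcard1 : (E.filter fun f => ¬ bconf emax f).card ≤ n := by
      have hsub : (E.filter fun f => ¬ bconf emax f) ⊆ E.erase emax := by
        intro f hf
        rw [Finset.mem_filter] at hf
        refine Finset.mem_erase.2 ⟨?_, hf.1⟩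
        rintro rfl
        exact hf.2 (bconf_refl f)
      have := Finset.card_le_card hsub
      rw [Finset.card_erase_of_mem hemaxE] at this
      omega
    have hcard2 : (E.filter fun f => f.1 ≠ emax.1).card ≤ n := by
      have hsub : (E.filter fun f => f.1 ≠ emax.1) ⊆ E.erase emax := by
        intro f hf
        rw [Finset.mem_filter] at hf
        exact Finset.mem_erase.2 ⟨fun h => hf.2 (h ▸ rfl), hf.1⟩
      have := Finset.card_le_card hsub
      rw [Finset.card_erase_of_mem hemaxE] at this
      omega
    have hwinj1 : Set.InjOn w ↑(E.filter fun f => ¬ bconf emax f) :=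
      hwinj.mono (by exact_mod_cast Finset.filter_subset _ _)
    have hwinj2 : Set.InjOn w ↑(E.filter fun f => f.1 ≠ emax.1) :=
      hwinj.mono (by exact_mod_cast Finset.filter_subset _ _)
    have hE1z : ∀ f ∈ E.filter (fun f => ¬ bconf emax f), f.1 ≠ emax.1 :=
      fun f hf => (mem_E1_ne hf).1
    have hE2z : ∀ f ∈ E.filter (fun f => f.1 ≠ emax.1), f.1 ≠ emax.1 :=
      fun f hf => (Finset.mem_filter.1 hf).2
    have hcoef : ∀ B : Finset L, 0 ≤ p ^ B.card
        * (1 - p) ^ ((Finset.univ.erase emax.1).card - B.card) :=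
      fun B => mul_nonneg (pow_nonneg hp0 _) (pow_nonneg (by linarith) _)
    by_cases hr : r = emax.2
    · -- the right vertex of the max edge: it is free iff `emax.1` is sampled
      subst hr
      rw [expSubsets_split hzuniv]
      have hv1 : ∀ B ∈ (Finset.univ.erase emax.1).powerset,
          (if (∀ u, u ∉ insert emax.1 B → (u, emax.2) ∉ greedy w bconf
            (subL E (insert u (insert emax.1 B)))) then (1:ℝ) else 0) = 1 := by
        intro B _
        rw [if_pos]
        intro u huB hmem
        have huz : u ≠ emax.1 := fun h => huB (h ▸ Finset.mem_insert_self _ _)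
        rw [greedy_subL_top hwinj hemaxE hmax
          (Finset.mem_insert_of_mem (Finset.mem_insert_self _ _))] at hmem
        rcases Finset.mem_insert.1 hmem with heq | hmem'
        · exact huz (congrArg Prod.fst heq)
        · exact (mem_E1_ne (subL_subset _ _ (greedy_subset _ _ _ hmem'))).2 rfl
      have hv0 : ∀ B : Finset L, (0:ℝ) ≤ (if (∀ u, u ∉ B → (u, emax.2) ∉ greedy w bconf
          (subL E (insert u B))) then (1:ℝ) else 0) := by
        intro B
        split_ifs <;> norm_num
      have hterm : ∀ B ∈ (Finset.univ.erase emax.1).powerset,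
          p ^ B.card * (1 - p) ^ ((Finset.univ.erase emax.1).card - B.card) * p
          ≤ p ^ B.card * (1 - p) ^ ((Finset.univ.erase emax.1).card - B.card) *
            ((1 - p) * (if (∀ u, u ∉ B → (u, emax.2) ∉ greedy w bconf
              (subL E (insert u B))) then (1:ℝ) else 0)
             + p * (if (∀ u, u ∉ insert emax.1 B → (u, emax.2) ∉ greedy w bconf
              (subL E (insert u (insert emax.1 B)))) then (1:ℝ) else 0)) := by
        intro B hB
        apply mul_le_mul_of_nonneg_left _ (hcoef B)
        rw [hv1 B hB, mul_one]
        have := hv0 B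
        nlinarith
      calc p = (∑ B ∈ (Finset.univ.erase emax.1).powerset,
            p ^ B.card * (1 - p) ^ ((Finset.univ.erase emax.1).card - B.card)) * p := by
              rw [sum_pow_powerset, one_mul]
        _ = ∑ B ∈ (Finset.univ.erase emax.1).powerset,
            p ^ B.card * (1 - p) ^ ((Finset.univ.erase emax.1).card - B.card) * p := by
              rw [Finset.sum_mul]
        _ ≤ _ := Finset.sum_le_sum hterm
    · -- r is not the max edge's right vertex: reduce to the two subgraphs
      rw [expSubsets_split hzuniv]
      -- pointwise identification with the E₁ and E₂ indicators
      have hv_ins : ∀ B ∈ (Finset.univ.erase emax.1).powerset,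
          (if (∀ u, u ∉ insert emax.1 B → (u, r) ∉ greedy w bconf
            (subL E (insert u (insert emax.1 B)))) then (1:ℝ) else 0)
          = (if (∀ u, u ∉ B → (u, r) ∉ greedy w bconf
            (subL (E.filter fun f => ¬ bconf emax f) (insert u B))) then (1:ℝ) else 0) := by
        intro B hB
        rw [Finset.mem_powerset] at hB
        have hzB : emax.1 ∉ B := fun hh => (Finset.notMem_erase emax.1 _) (hB hh)
        apply if_congr _ rfl rfl
        constructor
        · intro h u huB hmem
          by_cases huz : u = emax.1
          · subst huz
            exact hE1z _ (subL_subset _ _ (greedy_subset _ _ _ hmem)) rfl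
          · have hu' : u ∉ insert emax.1 B := by
              simp only [Finset.mem_insert, not_or]
              exact ⟨huz, huB⟩
            apply h u hu'
            rw [greedy_subL_top hwinj hemaxE hmax
              (Finset.mem_insert_of_mem (Finset.mem_insert_self _ _))]
            apply Finset.mem_insert_of_mem
            rwa [subL_congr_of_ne hE1z (S := insert u (insert emax.1 B)) (S' := insert u B)
              (fun x hx => by simp only [Finset.mem_insert]; tauto)]
        · intro h u huB hmem
          have huz : u ≠ emax.1 := fun hh => huB (hh ▸ Finset.mem_insert_self _ _)
          have huB' : u ∉ B := fun hh => huB (Finset.mem_insert_of_mem hh)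
          rw [greedy_subL_top hwinj hemaxE hmax
            (Finset.mem_insert_of_mem (Finset.mem_insert_self _ _))] at hmem
          rcases Finset.mem_insert.1 hmem with heq | hmem'
          · exact huz (congrArg Prod.fst heq)
          · rw [subL_congr_of_ne hE1z (S := insert u (insert emax.1 B)) (S' := insert u B)
              (fun x hx => by simp only [Finset.mem_insert]; tauto)] at hmem'
            exact h u huB' hmem'
      have hv_B : ∀ B ∈ (Finset.univ.erase emax.1).powerset,
          (if (∀ u, u ∉ B → (u, r) ∉ greedy w bconf (subL E (insert u B)))
            then (1:ℝ) else 0)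
          = (if (∀ u, u ∉ B → (u, r) ∉ greedy w bconf
            (subL (E.filter fun f => f.1 ≠ emax.1) (insert u B))) then (1:ℝ) else 0) := by
        intro B hB
        rw [Finset.mem_powerset] at hB
        have hzB : emax.1 ∉ B := fun hh => (Finset.notMem_erase emax.1 _) (hB hh)
        apply if_congr _ rfl rfl
        constructor
        · intro h u huB hmem
          by_cases huz : u = emax.1
          · subst huz
            exact hE2z _ (subL_subset _ _ (greedy_subset _ _ _ hmem)) rfl
          · apply h u huB
            rwa [subL_eq_filter_ne (z := emax.1) (by
              simp only [Finset.mem_insert, not_or]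
              exact ⟨fun hh => huz hh.symm, hzB⟩)]
        · intro h u huB hmem
          by_cases huz : u = emax.1
          · subst huz
            rw [greedy_subL_top hwinj hemaxE hmax (Finset.mem_insert_self _ _)] at hmem
            rcases Finset.mem_insert.1 hmem with heq | hmem'
            · exact hr (congrArg Prod.snd heq)
            · exact hE1z _ (subL_subset _ _ (greedy_subset _ _ _ hmem')) rfl
          · apply h u huB
            rwa [subL_eq_filter_ne (z := emax.1) (by
              simp only [Finset.mem_insert, not_or]
              exact ⟨fun hh => huz hh.symm, hzB⟩)] at hmem
      -- apply the induction hypothesis to the two reduced graphs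
      have hzind1 : ∀ B ∈ (Finset.univ.erase emax.1).powerset,
          (if (∀ u, u ∉ insert emax.1 B → (u, r) ∉ greedy w bconf
            (subL (E.filter fun f => ¬ bconf emax f) (insert u (insert emax.1 B))))
            then (1:ℝ) else 0)
          = (if (∀ u, u ∉ B → (u, r) ∉ greedy w bconf
            (subL (E.filter fun f => ¬ bconf emax f) (insert u B))) then (1:ℝ) else 0) := by
        intro B hB
        rw [Finset.mem_powerset] at hB
        apply if_congr _ rfl rfl
        constructor
        · intro h u huB hmem
          by_cases huz : u = emax.1
          · subst huz
            exact hE1z _ (subL_subset _ _ (greedy_subset _ _ _ hmem)) rfl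
          · have hu' : u ∉ insert emax.1 B := by
              simp only [Finset.mem_insert, not_or]; exact ⟨huz, huB⟩
            apply h u hu'
            rwa [subL_congr_of_ne hE1z (S := insert u (insert emax.1 B)) (S' := insert u B)
              (fun x hx => by simp only [Finset.mem_insert]; tauto)]
        · intro h u huB hmem
          have huz : u ≠ emax.1 := fun hh => huB (hh ▸ Finset.mem_insert_self _ _)
          have huB' : u ∉ B := fun hh => huB (Finset.mem_insert_of_mem hh)
          rw [subL_congr_of_ne hE1z (S := insert u (insert emax.1 B)) (S' := insert u B)
            (fun x hx => by simp only [Finset.mem_insert]; tauto)] at hmem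
          exact h u huB' hmem
      have hzind2 : ∀ B ∈ (Finset.univ.erase emax.1).powerset,
          (if (∀ u, u ∉ insert emax.1 B → (u, r) ∉ greedy w bconf
            (subL (E.filter fun f => f.1 ≠ emax.1) (insert u (insert emax.1 B))))
            then (1:ℝ) else 0)
          = (if (∀ u, u ∉ B → (u, r) ∉ greedy w bconf
            (subL (E.filter fun f => f.1 ≠ emax.1) (insert u B))) then (1:ℝ) else 0) := by
        intro B hB
        rw [Finset.mem_powerset] at hB
        apply if_congr _ rfl rfl
        constructor
        · intro h u huB hmem
          by_cases huz : u = emax.1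
          · subst huz
            exact hE2z _ (subL_subset _ _ (greedy_subset _ _ _ hmem)) rfl
          · have hu' : u ∉ insert emax.1 B := by
              simp only [Finset.mem_insert, not_or]; exact ⟨huz, huB⟩
            apply h u hu'
            rwa [subL_congr_of_ne hE2z (S := insert u (insert emax.1 B)) (S' := insert u B)
              (fun x hx => by simp only [Finset.mem_insert]; tauto)]
        · intro h u huB hmem
          have huz : u ≠ emax.1 := fun hh => huB (hh ▸ Finset.mem_insert_self _ _)
          have huB' : u ∉ B := fun hh => huB (Finset.mem_insert_of_mem hh)
          rw [subL_congr_of_ne hE2z (S := insert u (insert emax.1 B)) (S' := insert u B)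
            (fun x hx => by simp only [Finset.mem_insert]; tauto)] at hmem
          exact h u huB' hmem
      have h1 : p ≤ ∑ B ∈ (Finset.univ.erase emax.1).powerset,
          p ^ B.card * (1 - p) ^ ((Finset.univ.erase emax.1).card - B.card) *
            (if (∀ u, u ∉ B → (u, r) ∉ greedy w bconf
              (subL (E.filter fun f => ¬ bconf emax f) (insert u B))) then (1:ℝ) else 0) := by
        have := ih (E.filter fun f => ¬ bconf emax f) w hcard1 hwinj1 r
        rwa [expSubsets_zindep hzuniv hzind1] at this
      have h2 : p ≤ ∑ B ∈ (Finset.univ.erase emax.1).powerset,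
          p ^ B.card * (1 - p) ^ ((Finset.univ.erase emax.1).card - B.card) *
            (if (∀ u, u ∉ B → (u, r) ∉ greedy w bconf
              (subL (E.filter fun f => f.1 ≠ emax.1) (insert u B))) then (1:ℝ) else 0) := by
        have := ih (E.filter fun f => f.1 ≠ emax.1) w hcard2 hwinj2 r
        rwa [expSubsets_zindep hzuniv hzind2] at this
      have hsum : ∑ B ∈ (Finset.univ.erase emax.1).powerset,
          p ^ B.card * (1 - p) ^ ((Finset.univ.erase emax.1).card - B.card) *
            ((1 - p) * (if (∀ u, u ∉ B → (u, r) ∉ greedy w bconf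
              (subL E (insert u B))) then (1:ℝ) else 0)
             + p * (if (∀ u, u ∉ insert emax.1 B → (u, r) ∉ greedy w bconf
              (subL E (insert u (insert emax.1 B)))) then (1:ℝ) else 0))
          = (1 - p) * (∑ B ∈ (Finset.univ.erase emax.1).powerset,
              p ^ B.card * (1 - p) ^ ((Finset.univ.erase emax.1).card - B.card) *
                (if (∀ u, u ∉ B → (u, r) ∉ greedy w bconf
                  (subL (E.filter fun f => f.1 ≠ emax.1) (insert u B))) then (1:ℝ) else 0))
            + p * (∑ B ∈ (Finset.univ.erase emax.1).powerset,
              p ^ B.card * (1 - p) ^ ((Finset.univ.erase emax.1).card - B.card) *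
                (if (∀ u, u ∉ B → (u, r) ∉ greedy w bconf
                  (subL (E.filter fun f => ¬ bconf emax f) (insert u B)))
                  then (1:ℝ) else 0)) := by
        rw [Finset.mul_sum, Finset.mul_sum, ← Finset.sum_add_distrib]
        apply Finset.sum_congr rfl
        intro B hB
        rw [hv_ins B hB, hv_B B hB]
        ring
      rw [hsum]
      nlinarith [h1, h2]

end ClaimP
section MainInduction

variable {L R : Type*} [Fintype L] [DecidableEq L] [DecidableEq R]

lemma toList_perm_cons_erase {ι : Type*} [DecidableEq ι] {s : Finset ι} {z : ι}
    (hz : z ∈ s) : s.toList.Perm (z :: (s.erase z).toList) := by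
  have h5 : insert z (s.erase z) = s := Finset.insert_erase hz
  have h6 := Finset.toList_insert (Finset.notMem_erase z s)
  rw [h5] at h6
  exact h6

lemma stepB_empty_graph {w : L × R → ℝ} {A : Finset L} (M : Finset (L × R)) (u : L) :
    stepB (∅ : Finset (L × R)) w A M u = M := by
  unfold stepB
  rw [subL_empty, greedy_empty]
  simp

lemma runB_empty_graph {w : L × R → ℝ} {A : Finset L} (ord : List L) :
    runB (∅ : Finset (L × R)) w A ord = ∅ := by
  unfold runB
  have : ∀ (l : List L) (M : Finset (L × R)),
      l.foldl (stepB (∅ : Finset (L × R)) w A) M = M := by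
    intro l
    induction l with
    | nil => intro M; rfl
    | cons a l ih => intro M; simp only [List.foldl_cons, stepB_empty_graph]; exact ih M
  exact this _ ∅

lemma optWeight_empty {w : L × R → ℝ} : optWeight w bconf (∅ : Finset (L × R)) = 0 := by
  apply le_antisymm
  · unfold optWeight
    apply Finset.sup'_le
    intro M hM
    rw [Finset.mem_filter, Finset.mem_powerset, Finset.subset_empty] at hM
    rw [hM.1, Finset.sum_empty]
  · exact optWeight_nonneg

lemma stepB_top_eq {E : Finset (L × R)} {w : L × R → ℝ} {estar : L × R}
    (hE : estar ∈ E) (hwinj : Set.InjOn w ↑E) (hmax : ∀ f ∈ E, w f ≤ w estar)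
    {A' : Finset L} (hz : estar.1 ∈ A') {u : L} (hu : u ≠ estar.1)
    (M : Finset (L × R)) :
    stepB E w A' M u = stepB (E.filter fun f => ¬ bconf estar f) w A' M u := by
  unfold stepB
  rw [greedy_subL_top hwinj hE hmax (Finset.mem_insert_of_mem hz)]
  congr 1
  ext f
  simp only [Finset.mem_filter, Finset.mem_insert]
  constructor
  · rintro ⟨rfl | hf, h1, h2⟩
    · exact absurd h1 (fun hh => hu hh.symm)
    · exact ⟨hf, h1, h2⟩
  · rintro ⟨hf, h1, h2⟩
    exact ⟨Or.inr hf, h1, h2⟩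

/-- z-independence of the no-candidate indicator, for graphs without `z`-edges. -/
lemma ind_zindep {E' : Finset (L × R)} {w : L × R → ℝ} {z : L}
    (hE' : ∀ f ∈ E', f.1 ≠ z) (r : R) :
    ∀ B ∈ ((Finset.univ : Finset L).erase z).powerset,
      (if (∀ u, u ∉ insert z B → (u, r) ∉ greedy w bconf (subL E' (insert u (insert z B))))
        then (1:ℝ) else 0)
      = (if (∀ u, u ∉ B → (u, r) ∉ greedy w bconf (subL E' (insert u B)))
        then (1:ℝ) else 0) := by
  intro B _
  apply if_congr _ rfl rfl
  constructor
  · intro h u huB hmem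
    by_cases huz : u = z
    · subst huz
      exact hE' _ (subL_subset _ _ (greedy_subset _ _ _ hmem)) rfl
    · have hu' : u ∉ insert z B := by
        simp only [Finset.mem_insert, not_or]; exact ⟨huz, huB⟩
      apply h u hu'
      rwa [subL_congr_of_ne hE' (S := insert u (insert z B)) (S' := insert u B)
        (fun x hx => by simp only [Finset.mem_insert]; tauto)]
  · intro h u huB hmem
    have huz : u ≠ z := fun hh => huB (hh ▸ Finset.mem_insert_self _ _)
    have huB' : u ∉ B := fun hh => huB (Finset.mem_insert_of_mem hh)
    rw [subL_congr_of_ne hE' (S := insert u (insert z B)) (S' := insert u B)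
      (fun x hx => by simp only [Finset.mem_insert]; tauto)] at hmem
    exact h u huB' hmem

/-- The main induction: the greedy-based online algorithm is `p²`-competitive in
expectation when `p² + 2p = 1`. -/
theorem mainB (p : ℝ) (hp0 : 0 ≤ p) (hp1 : p ≤ 1) (hpe : p^2 + 2*p - 1 = 0) :
    ∀ (n : ℕ) (E : Finset (L × R)) (w : L × R → ℝ), E.card ≤ n →
    (∀ e ∈ E, 0 ≤ w e) → Set.InjOn w ↑E →
    ∀ (σ : Finset L → List L), (∀ A : Finset L, (σ A).Perm (Finset.univ \ A).toList) →
    p^2 * optWeight w bconf E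
      ≤ expSubsets p Finset.univ (fun A => ∑ e ∈ runB E w A (σ A), w e) := by
  intro n
  induction n with
  | zero =>
    intro E w hcard hw0 hwinj σ hσ
    have hE : E = ∅ := Finset.card_eq_zero.1 (Nat.le_zero.1 hcard)
    subst hE
    rw [optWeight_empty, mul_zero]
    unfold expSubsets
    apply Finset.sum_nonneg
    intro A _
    simp [runB_empty_graph]
  | succ n ih =>
    intro E w hcard hw0 hwinj σ hσ
    by_cases hne : E.Nonempty
    swap
    · rw [Finset.not_nonempty_iff_eq_empty] at hne
      exact ih E w (by simp [hne]) hw0 hwinj σ hσ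
    obtain ⟨emax, hemaxE, hmax⟩ := Finset.exists_max_image E w hne
    have hzuniv : emax.1 ∈ (Finset.univ : Finset L) := Finset.mem_univ _
    have hW0 : 0 ≤ w emax := hw0 emax hemaxE
    have hcard1 : (E.filter fun f => ¬ bconf emax f).card ≤ n := by
      have hsub : (E.filter fun f => ¬ bconf emax f) ⊆ E.erase emax := by
        intro f hf
        rw [Finset.mem_filter] at hf
        refine Finset.mem_erase.2 ⟨?_, hf.1⟩
        rintro rfl
        exact hf.2 (bconf_refl f)
      have := Finset.card_le_card hsub
      rw [Finset.card_erase_of_mem hemaxE] at this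
      omega
    have hcard2 : (E.filter fun f => f.1 ≠ emax.1).card ≤ n := by
      have hsub : (E.filter fun f => f.1 ≠ emax.1) ⊆ E.erase emax := by
        intro f hf
        rw [Finset.mem_filter] at hf
        exact Finset.mem_erase.2 ⟨fun h => hf.2 (h ▸ rfl), hf.1⟩
      have := Finset.card_le_card hsub
      rw [Finset.card_erase_of_mem hemaxE] at this
      omega
    have hw01 : ∀ e ∈ E.filter (fun f => ¬ bconf emax f), 0 ≤ w e :=
      fun e he => hw0 e (Finset.mem_of_mem_filter _ he)
    have hw02 : ∀ e ∈ E.filter (fun f => f.1 ≠ emax.1), 0 ≤ w e :=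
      fun e he => hw0 e (Finset.mem_of_mem_filter _ he)
    have hwinj1 : Set.InjOn w ↑(E.filter fun f => ¬ bconf emax f) :=
      hwinj.mono (by exact_mod_cast Finset.filter_subset _ _)
    have hwinj2 : Set.InjOn w ↑(E.filter fun f => f.1 ≠ emax.1) :=
      hwinj.mono (by exact_mod_cast Finset.filter_subset _ _)
    have hE1z : ∀ f ∈ E.filter (fun f => ¬ bconf emax f), f.1 ≠ emax.1 :=
      fun f hf => (mem_E1_ne hf).1
    have hE2z : ∀ f ∈ E.filter (fun f => f.1 ≠ emax.1), f.1 ≠ emax.1 :=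
      fun f hf => (Finset.mem_filter.1 hf).2
    have hcoef : ∀ B : Finset L, 0 ≤ p ^ B.card
        * (1 - p) ^ ((Finset.univ.erase emax.1).card - B.card) :=
      fun B => mul_nonneg (pow_nonneg hp0 _) (pow_nonneg (by linarith) _)
    -- arrival rules for the reduced instances
    set τ : Finset L → List L := fun C =>
      if emax.1 ∈ C then σ C else emax.1 :: σ (insert emax.1 C) with hτ
    set υ : Finset L → List L := fun C =>
      if emax.1 ∈ C then (σ (C.erase emax.1)).erase emax.1
      else emax.1 :: ((σ C).erase emax.1) with hυ
    have hτperm : ∀ C : Finset L, (τ C).Perm (Finset.univ \ C).toList := by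
      intro C
      by_cases hC : emax.1 ∈ C
      · rw [hτ]; beta_reduce; rw [if_pos hC]; exact hσ C
      · rw [hτ]; beta_reduce; rw [if_neg hC]
        have h2 : (Finset.univ : Finset L) \ insert emax.1 C
            = (Finset.univ \ C).erase emax.1 := by
          ext x
          simp only [Finset.mem_sdiff, Finset.mem_erase, Finset.mem_insert,
            Finset.mem_univ, true_and, not_or]
          try tauto
        have h3 : emax.1 ∈ (Finset.univ : Finset L) \ C := by
          simp only [Finset.mem_sdiff, Finset.mem_univ, true_and]; exact hC
        have h1 : (σ (insert emax.1 C)).Perm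
            (((Finset.univ : Finset L) \ C).erase emax.1).toList := by
          have := hσ (insert emax.1 C)
          rwa [h2] at this
        exact (h1.cons emax.1).trans (toList_perm_cons_erase h3).symm
    have hυperm : ∀ C : Finset L, (υ C).Perm (Finset.univ \ C).toList := by
      intro C
      by_cases hC : emax.1 ∈ C
      · rw [hυ]; beta_reduce; rw [if_pos hC]
        have h2 : (Finset.univ : Finset L) \ (C.erase emax.1)
            = insert emax.1 (Finset.univ \ C) := by
          ext x
          simp only [Finset.mem_sdiff, Finset.mem_erase, Finset.mem_insert,
            Finset.mem_univ, true_and]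
          try tauto
        have hznot : emax.1 ∉ (Finset.univ : Finset L) \ C := by
          simp only [Finset.mem_sdiff, Finset.mem_univ, true_and, not_not]; exact hC
        have h1 : (σ (C.erase emax.1)).Perm
            (insert emax.1 ((Finset.univ : Finset L) \ C)).toList := by
          have := hσ (C.erase emax.1)
          rwa [h2] at this
        have h4 := (h1.erase emax.1).trans
          ((Finset.toList_insert hznot).erase emax.1)
        rwa [List.erase_cons_head] at h4
      · rw [hυ]; beta_reduce; rw [if_neg hC]
        have h3 : emax.1 ∈ (Finset.univ : Finset L) \ C := by
          simp only [Finset.mem_sdiff, Finset.mem_univ, true_and]; exact hC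
        have h1 := ((hσ C).erase emax.1).trans
          ((toList_perm_cons_erase h3).erase emax.1)
        rw [List.erase_cons_head] at h1
        exact (h1.cons emax.1).trans (toList_perm_cons_erase h3).symm
    -- pointwise value identifications
    have hv1 : ∀ B ∈ (Finset.univ.erase emax.1).powerset,
        (∑ e ∈ runB E w (insert emax.1 B) (σ (insert emax.1 B)), w e)
        = ∑ e ∈ runB (E.filter fun f => ¬ bconf emax f) w (insert emax.1 B)
            (σ (insert emax.1 B)), w e := by
      intro B _
      congr 1
      unfold runB
      apply foldl_congr_mem
      intro M u hu
      have humem : u ∈ (Finset.univ : Finset L) \ insert emax.1 B :=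
        Finset.mem_toList.1 (((hσ _).mem_iff).1 hu)
      have hu' : u ≠ emax.1 := by
        rw [Finset.mem_sdiff] at humem
        intro hh
        exact humem.2 (hh ▸ Finset.mem_insert_self _ _)
      exact stepB_top_eq hemaxE hwinj hmax (Finset.mem_insert_self _ _) hu' M
    -- expectation over the E₁ instance with rule τ
    have hEXP1 : expSubsets p Finset.univ
        (fun C => ∑ e ∈ runB (E.filter fun f => ¬ bconf emax f) w C (τ C), w e)
        = ∑ B ∈ (Finset.univ.erase emax.1).powerset,
          p ^ B.card * (1 - p) ^ ((Finset.univ.erase emax.1).card - B.card) *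
            (∑ e ∈ runB (E.filter fun f => ¬ bconf emax f) w (insert emax.1 B)
              (σ (insert emax.1 B)), w e) := by
      rw [expSubsets_split hzuniv]
      apply Finset.sum_congr rfl
      intro B hB
      rw [Finset.mem_powerset] at hB
      have hzB : emax.1 ∉ B := fun hh => Finset.notMem_erase emax.1 _ (hB hh)
      have hins : τ (insert emax.1 B) = σ (insert emax.1 B) := by
        rw [hτ]; beta_reduce; rw [if_pos (Finset.mem_insert_self _ _)]
      have hτB : τ B = emax.1 :: σ (insert emax.1 B) := by
        rw [hτ]; beta_reduce; rw [if_neg hzB]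
      have hBval : (∑ e ∈ runB (E.filter fun f => ¬ bconf emax f) w B (τ B), w e)
          = ∑ e ∈ runB (E.filter fun f => ¬ bconf emax f) w (insert emax.1 B)
              (σ (insert emax.1 B)), w e := by
        rw [hτB]
        congr 1
        unfold runB
        rw [List.foldl_cons, stepB_inert hE1z]
        apply foldl_congr_mem
        intro M u _
        exact (stepB_sample_inert hE1z M u).symm
      beta_reduce
      rw [hBval, hins]
      ring
    -- expectation over the E₂ instance with rule υ
    have hEXP2 : expSubsets p Finset.univ
        (fun C => ∑ e ∈ runB (E.filter fun f => f.1 ≠ emax.1) w C (υ C), w e)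
        = ∑ B ∈ (Finset.univ.erase emax.1).powerset,
          p ^ B.card * (1 - p) ^ ((Finset.univ.erase emax.1).card - B.card) *
            (∑ e ∈ runB (E.filter fun f => f.1 ≠ emax.1) w B
              ((σ B).erase emax.1), w e) := by
      rw [expSubsets_split hzuniv]
      apply Finset.sum_congr rfl
      intro B hB
      rw [Finset.mem_powerset] at hB
      have hzB : emax.1 ∉ B := fun hh => Finset.notMem_erase emax.1 _ (hB hh)
      have hυB : υ B = emax.1 :: (σ B).erase emax.1 := by
        rw [hυ]; beta_reduce; rw [if_neg hzB]
      have hυins : υ (insert emax.1 B) = (σ B).erase emax.1 := by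
        rw [hυ]; beta_reduce
        rw [if_pos (Finset.mem_insert_self emax.1 B), Finset.erase_insert hzB]
      have hBval : (∑ e ∈ runB (E.filter fun f => f.1 ≠ emax.1) w B (υ B), w e)
          = ∑ e ∈ runB (E.filter fun f => f.1 ≠ emax.1) w B ((σ B).erase emax.1), w e := by
        rw [hυB]
        congr 1
        unfold runB
        rw [List.foldl_cons, stepB_inert hE2z]
      have hinsval : (∑ e ∈ runB (E.filter fun f => f.1 ≠ emax.1) w (insert emax.1 B)
            (υ (insert emax.1 B)), w e)
          = ∑ e ∈ runB (E.filter fun f => f.1 ≠ emax.1) w B ((σ B).erase emax.1), w e := by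
        rw [hυins]
        congr 1
        unfold runB
        apply foldl_congr_mem
        intro M u _
        exact stepB_sample_inert hE2z M u
      beta_reduce
      rw [hBval, hinsval]
      ring
    -- expectation of the indicator
    have hEXPind : expSubsets p Finset.univ
        (fun A => if (∀ u, u ∉ A → (u, emax.2) ∉ greedy w bconf
          (subL (E.filter fun f => f.1 ≠ emax.1) (insert u A))) then (1:ℝ) else 0)
        = ∑ B ∈ (Finset.univ.erase emax.1).powerset,
          p ^ B.card * (1 - p) ^ ((Finset.univ.erase emax.1).card - B.card) *
            (if (∀ u, u ∉ B → (u, emax.2) ∉ greedy w bconf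
              (subL (E.filter fun f => f.1 ≠ emax.1) (insert u B))) then (1:ℝ) else 0) :=
      expSubsets_zindep hzuniv (ind_zindep hE2z emax.2)
    -- pointwise comparison via cmpRun
    have hv4 : ∀ B ∈ (Finset.univ.erase emax.1).powerset,
        (∑ e ∈ runB (E.filter fun f => f.1 ≠ emax.1) w B ((σ B).erase emax.1), w e)
          + w emax * (if (∀ u, u ∉ B → (u, emax.2) ∉ greedy w bconf
            (subL (E.filter fun f => f.1 ≠ emax.1) (insert u B))) then (1:ℝ) else 0)
        ≤ ∑ e ∈ runB E w B (σ B), w e := by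
      intro B hB
      rw [Finset.mem_powerset] at hB
      have hzB : emax.1 ∉ B := fun hh => Finset.notMem_erase emax.1 _ (hB hh)
      have hnd : (σ B).Nodup := ((hσ B).nodup_iff).2 (Finset.nodup_toList _)
      have hzmem : emax.1 ∈ σ B := ((hσ B).mem_iff).2 (Finset.mem_toList.2 (by
        simp only [Finset.mem_sdiff, Finset.mem_univ, true_and]; exact hzB))
      have hcmp := cmpRun hemaxE hw0 hwinj hmax hzB (σ B) hnd hzmem
      have hifeq : (if (∀ u ∈ σ B, (u, emax.2) ∉ greedy w bconf
            (subL (E.filter fun f => f.1 ≠ emax.1) (insert u B))) then w emax else 0)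
          = w emax * (if (∀ u, u ∉ B → (u, emax.2) ∉ greedy w bconf
            (subL (E.filter fun f => f.1 ≠ emax.1) (insert u B))) then (1:ℝ) else 0) := by
        have hiff : (∀ u ∈ σ B, (u, emax.2) ∉ greedy w bconf
              (subL (E.filter fun f => f.1 ≠ emax.1) (insert u B)))
            ↔ (∀ u, u ∉ B → (u, emax.2) ∉ greedy w bconf
              (subL (E.filter fun f => f.1 ≠ emax.1) (insert u B))) := by
          constructor
          · intro h u huB
            apply h u
            rw [(hσ B).mem_iff, Finset.mem_toList, Finset.mem_sdiff]
            exact ⟨Finset.mem_univ _, huB⟩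
          · intro h u hu
            apply h u
            have := ((hσ B).mem_iff).1 hu
            rw [Finset.mem_toList, Finset.mem_sdiff] at this
            exact this.2
        rw [if_congr hiff rfl rfl]
        split_ifs <;> ring
      rw [hifeq] at hcmp
      exact hcmp
    -- assemble
    have hgoal : expSubsets p Finset.univ (fun A => ∑ e ∈ runB E w A (σ A), w e)
        = ∑ B ∈ (Finset.univ.erase emax.1).powerset,
          p ^ B.card * (1 - p) ^ ((Finset.univ.erase emax.1).card - B.card) *
            ((1 - p) * (∑ e ∈ runB E w B (σ B), w e)
              + p * (∑ e ∈ runB E w (insert emax.1 B) (σ (insert emax.1 B)), w e)) := by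
      rw [expSubsets_split hzuniv]
    rw [hgoal]
    have hstep1 : ∑ B ∈ (Finset.univ.erase emax.1).powerset,
        p ^ B.card * (1 - p) ^ ((Finset.univ.erase emax.1).card - B.card) *
          ((1 - p) * ((∑ e ∈ runB (E.filter fun f => f.1 ≠ emax.1) w B
              ((σ B).erase emax.1), w e)
            + w emax * (if (∀ u, u ∉ B → (u, emax.2) ∉ greedy w bconf
              (subL (E.filter fun f => f.1 ≠ emax.1) (insert u B))) then (1:ℝ) else 0))
          + p * (∑ e ∈ runB (E.filter fun f => ¬ bconf emax f) w (insert emax.1 B)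
              (σ (insert emax.1 B)), w e))
        ≤ ∑ B ∈ (Finset.univ.erase emax.1).powerset,
          p ^ B.card * (1 - p) ^ ((Finset.univ.erase emax.1).card - B.card) *
            ((1 - p) * (∑ e ∈ runB E w B (σ B), w e)
              + p * (∑ e ∈ runB E w (insert emax.1 B) (σ (insert emax.1 B)), w e)) := by
      apply Finset.sum_le_sum
      intro B hB
      apply mul_le_mul_of_nonneg_left _ (hcoef B)
      have h4 := hv4 B hB
      have h1 := hv1 B hB
      rw [h1]
      have hq0 : (0:ℝ) ≤ 1 - p := by linarith
      nlinarith [h4]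
    refine le_trans ?_ hstep1
    -- distribute the sums
    have hdist : ∑ B ∈ (Finset.univ.erase emax.1).powerset,
        p ^ B.card * (1 - p) ^ ((Finset.univ.erase emax.1).card - B.card) *
          ((1 - p) * ((∑ e ∈ runB (E.filter fun f => f.1 ≠ emax.1) w B
              ((σ B).erase emax.1), w e)
            + w emax * (if (∀ u, u ∉ B → (u, emax.2) ∉ greedy w bconf
              (subL (E.filter fun f => f.1 ≠ emax.1) (insert u B))) then (1:ℝ) else 0))
          + p * (∑ e ∈ runB (E.filter fun f => ¬ bconf emax f) w (insert emax.1 B)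
              (σ (insert emax.1 B)), w e))
        = (1 - p) * (∑ B ∈ (Finset.univ.erase emax.1).powerset,
            p ^ B.card * (1 - p) ^ ((Finset.univ.erase emax.1).card - B.card) *
              (∑ e ∈ runB (E.filter fun f => f.1 ≠ emax.1) w B
                ((σ B).erase emax.1), w e))
          + (1 - p) * w emax * (∑ B ∈ (Finset.univ.erase emax.1).powerset,
            p ^ B.card * (1 - p) ^ ((Finset.univ.erase emax.1).card - B.card) *
              (if (∀ u, u ∉ B → (u, emax.2) ∉ greedy w bconf
                (subL (E.filter fun f => f.1 ≠ emax.1) (insert u B))) then (1:ℝ) else 0))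
          + p * (∑ B ∈ (Finset.univ.erase emax.1).powerset,
            p ^ B.card * (1 - p) ^ ((Finset.univ.erase emax.1).card - B.card) *
              (∑ e ∈ runB (E.filter fun f => ¬ bconf emax f) w (insert emax.1 B)
                (σ (insert emax.1 B)), w e)) := by
      rw [Finset.mul_sum, Finset.mul_sum, Finset.mul_sum, ← Finset.sum_add_distrib,
        ← Finset.sum_add_distrib]
      apply Finset.sum_congr rfl
      intro B _
      ring
    rw [hdist]
    -- apply the induction hypotheses and the probabilistic claim
    have hS1 : p^2 * optWeight w bconf (E.filter fun f => ¬ bconf emax f)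
        ≤ ∑ B ∈ (Finset.univ.erase emax.1).powerset,
          p ^ B.card * (1 - p) ^ ((Finset.univ.erase emax.1).card - B.card) *
            (∑ e ∈ runB (E.filter fun f => ¬ bconf emax f) w (insert emax.1 B)
              (σ (insert emax.1 B)), w e) := by
      rw [← hEXP1]
      exact ih _ w hcard1 hw01 hwinj1 τ hτperm
    have hS2 : p^2 * optWeight w bconf (E.filter fun f => f.1 ≠ emax.1)
        ≤ ∑ B ∈ (Finset.univ.erase emax.1).powerset,
          p ^ B.card * (1 - p) ^ ((Finset.univ.erase emax.1).card - B.card) *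
            (∑ e ∈ runB (E.filter fun f => f.1 ≠ emax.1) w B
              ((σ B).erase emax.1), w e) := by
      rw [← hEXP2]
      exact ih _ w hcard2 hw02 hwinj2 υ hυperm
    have hSind : p ≤ ∑ B ∈ (Finset.univ.erase emax.1).powerset,
        p ^ B.card * (1 - p) ^ ((Finset.univ.erase emax.1).card - B.card) *
          (if (∀ u, u ∉ B → (u, emax.2) ∉ greedy w bconf
            (subL (E.filter fun f => f.1 ≠ emax.1) (insert u B))) then (1:ℝ) else 0) := by
      rw [← hEXPind]
      exact claimP p hp0 hp1 n _ w hcard2 hwinj2 emax.2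
    have hO1 := opt_le_opt_filter_bconf hemaxE hw0 hmax
    have hO2 := opt_le_opt_filter_left hemaxE hw0 hmax
    -- final arithmetic
    have hq0 : (0:ℝ) ≤ 1 - p := by linarith
    have hp2 : (0:ℝ) ≤ p^2 := sq_nonneg p
    have c1 : p * (p^2 * (optWeight w bconf E - 2 * w emax))
        ≤ p * (∑ B ∈ (Finset.univ.erase emax.1).powerset,
          p ^ B.card * (1 - p) ^ ((Finset.univ.erase emax.1).card - B.card) *
            (∑ e ∈ runB (E.filter fun f => ¬ bconf emax f) w (insert emax.1 B)
              (σ (insert emax.1 B)), w e)) := by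
      apply mul_le_mul_of_nonneg_left _ hp0
      calc p^2 * (optWeight w bconf E - 2 * w emax)
          ≤ p^2 * optWeight w bconf (E.filter fun f => ¬ bconf emax f) := by
            apply mul_le_mul_of_nonneg_left _ hp2
            linarith
        _ ≤ _ := hS1
    have c2 : (1 - p) * (p^2 * (optWeight w bconf E - w emax))
        ≤ (1 - p) * (∑ B ∈ (Finset.univ.erase emax.1).powerset,
          p ^ B.card * (1 - p) ^ ((Finset.univ.erase emax.1).card - B.card) *
            (∑ e ∈ runB (E.filter fun f => f.1 ≠ emax.1) w B
              ((σ B).erase emax.1), w e)) := by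
      apply mul_le_mul_of_nonneg_left _ hq0
      calc p^2 * (optWeight w bconf E - w emax)
          ≤ p^2 * optWeight w bconf (E.filter fun f => f.1 ≠ emax.1) := by
            apply mul_le_mul_of_nonneg_left _ hp2
            linarith
        _ ≤ _ := hS2
    have c3 : (1 - p) * w emax * p
        ≤ (1 - p) * w emax * (∑ B ∈ (Finset.univ.erase emax.1).powerset,
          p ^ B.card * (1 - p) ^ ((Finset.univ.erase emax.1).card - B.card) *
            (if (∀ u, u ∉ B → (u, emax.2) ∉ greedy w bconf
              (subL (E.filter fun f => f.1 ≠ emax.1) (insert u B))) then (1:ℝ) else 0)) := by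
      apply mul_le_mul_of_nonneg_left hSind (mul_nonneg hq0 hW0)
    have hring : (1 - p) * (p^2 * (optWeight w bconf E - w emax))
        + (1 - p) * w emax * p
        + p * (p^2 * (optWeight w bconf E - 2 * w emax))
        = p^2 * optWeight w bconf E + w emax * p * (1 - 2*p - p^2) := by
      ring
    have hzero : (1:ℝ) - 2*p - p^2 = 0 := by linarith
    rw [hzero, mul_zero, add_zero] at hring
    linarith [c1, c2, c3, hring]

end MainInduction

/-- The greedy-based online algorithm with vertex-sampling probability
`p = √2 - 1` is order-oblivious `(3 - 2√2)`-competitive: for every arrival-order rule `σ`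
for the vertices of `L \ L'`, the expected weight of its output matching is at least
`(3 - 2√2) · OPT(G)`. -/
theorem stmt6 {L R : Type*} [Fintype L] [DecidableEq L] [DecidableEq R]
    (E : Finset (L × R)) (w : L × R → ℝ)
    (hw0 : ∀ e ∈ E, 0 ≤ w e) (hwinj : Set.InjOn w ↑E)
    (σ : Finset L → List L)
    (hσ : ∀ A : Finset L, (σ A).Perm (Finset.univ \ A).toList) :
    expSubsets (Real.sqrt 2 - 1) Finset.univ (fun A => ∑ e ∈ runB E w A (σ A), w e)
      ≥ (3 - 2 * Real.sqrt 2) * optWeight w bconf E := by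
  have hs : Real.sqrt 2 ^ 2 = 2 := Real.sq_sqrt (by norm_num)
  have hs0 : 0 ≤ Real.sqrt 2 := Real.sqrt_nonneg 2
  have hs1 : 1 ≤ Real.sqrt 2 := by nlinarith
  have hs2 : Real.sqrt 2 ≤ 2 := by nlinarith
  have hp0 : (0:ℝ) ≤ Real.sqrt 2 - 1 := by linarith
  have hp1 : Real.sqrt 2 - 1 ≤ 1 := by linarith
  have hpe : (Real.sqrt 2 - 1)^2 + 2*(Real.sqrt 2 - 1) - 1 = 0 := by nlinarith
  have h := mainB (Real.sqrt 2 - 1) hp0 hp1 hpe E.card E w le_rfl hw0 hwinj σ hσ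
  have hco : (Real.sqrt 2 - 1)^2 = 3 - 2*Real.sqrt 2 := by nlinarith
  rw [ge_iff_le, ← hco]
  exact h
end

section
/- Any order-oblivious online algorithm for the secretary problem on n elements has competitive ratio at most (1/4)(1 + 5/(n−1)) = 1/4 + o(1). That is, for any algorithm that sets a (possibly random) sampling-phase length k, observes the first k elements of a uniformly random permutation of the adversarial input as a sample, and then must guarantee its expected accepted value against every arrival order of the remaining elements, there exists an input of n positive values on which the expected value accepted by the algorithm is at most (1/4)(1 + 5/(n−1)) times the maximum value. -/
open Finset

open scoped Classical

/-- The expected value collected by a (randomized) secretary algorithm, described by its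
acceptance probabilities `accept k l` (the probability of accepting the element arriving
last in the observed sequence `l`, given sampling-phase length `k`), when it runs on the
full arrival sequence `vs` (whose first `k` entries form the sample, during which nothing
is accepted). -/
noncomputable def secPayoff (accept : ℕ → List ℝ → ℝ) (k : ℕ) (vs : List ℝ) : ℝ :=
  ∑ j ∈ Finset.Ico k vs.length,
    vs.getD j 0 * accept k (vs.take (j + 1)) *
      ∏ i ∈ Finset.Ico k j, (1 - accept k (vs.take (i + 1)))

namespace Stmt8

open List


/-! ### List infrastructure -/

variable {n k : ℕ} {K : List ℕ}

/-- The full index arrival order. -/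
def idxList (n : ℕ) (K : List ℕ) : List ℕ := K ++ (List.range n).diff K

lemma idxList_perm (hK : K <+~ List.range n) : idxList n K ~ List.range n :=
  List.subperm_append_diff_self_of_count_le (fun x _ => hK.count_le x)

lemma idxList_length (hK : K <+~ List.range n) : (idxList n K).length = n := by
  simpa using (idxList_perm hK).length_eq

lemma idxList_nodup (hK : K <+~ List.range n) : (idxList n K).Nodup :=
  ((idxList_perm hK).nodup_iff).2 (List.nodup_range (n := n))

lemma mem_idxList (hK : K <+~ List.range n) {t : ℕ} : t ∈ idxList n K ↔ t < n := by
  rw [(idxList_perm hK).mem_iff, List.mem_range]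

lemma diff_eq_filter' : (List.range n).diff K = (List.range n).filter (fun x => x ∉ K) := by
  simpa using (List.nodup_range (n := n)).diff_eq_filter (l₂ := K)

/-- position of index `t` in the arrival order -/
def pos (n : ℕ) (K : List ℕ) (t : ℕ) : ℕ := (idxList n K).idxOf t

lemma pos_lt_of_mem (hK : K <+~ List.range n) (hKl : K.length = k) {t : ℕ} (ht : t ∈ K) :
    pos n K t < k := by
  rw [pos, idxList, List.idxOf_append_of_mem ht, ← hKl]
  exact List.idxOf_lt_length_iff.2 ht

lemma pos_eq_of_not_mem (hKl : K.length = k) {t : ℕ} (ht : t ∉ K) :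
    pos n K t = k + ((List.range n).filter (fun x => x ∉ K)).idxOf t := by
  rw [pos, idxList, List.idxOf_append_of_notMem ht, hKl, diff_eq_filter']

lemma le_pos_of_not_mem (hKl : K.length = k) {t : ℕ} (ht : t ∉ K) :
    k ≤ pos n K t := by
  rw [pos_eq_of_not_mem hKl ht]; exact Nat.le_add_right _ _

lemma pos_lt_n (hK : K <+~ List.range n) {t : ℕ} (ht : t < n) :
    pos n K t < n := by
  have h := List.idxOf_lt_length_iff.2 ((mem_idxList hK).2 ht)
  rwa [idxList_length hK] at h

lemma get_pos (hK : K <+~ List.range n) {t : ℕ} (ht : t < n) :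
    (idxList n K).get ⟨pos n K t, by rw [idxList_length hK]; exact pos_lt_n hK ht⟩ = t :=
  List.idxOf_get _

lemma getElem_ne_of_lt_pos (hK : K <+~ List.range n) {t i : ℕ} (ht : t < n)
    (hi : i < n) (hlt : i < pos n K t) :
    (idxList n K)[i]'(by rw [idxList_length hK]; exact hi) ≠ t := by
  intro h
  have : pos n K t = i := by
    have : List.idxOf ((idxList n K)[i]'(by rw [idxList_length hK]; exact hi)) (idxList n K) = i := by
      simpa using List.get_idxOf (idxList_nodup hK) ⟨i, (by rw [idxList_length hK]; exact hi)⟩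
    rw [h] at this
    exact this.symm ▸ rfl
  omega

lemma pos_succ (hK : K <+~ List.range n) (hKl : K.length = k) {t : ℕ} (ht : t + 1 < n)
    (h1 : t ∉ K) (h2 : t + 1 ∉ K) :
    pos n K (t + 1) = pos n K t + 1 := by
  rw [pos_eq_of_not_mem hKl h1, pos_eq_of_not_mem hKl h2]
  obtain ⟨m, rfl⟩ : ∃ m, n = (t + 2) + m := ⟨n - (t + 2), by omega⟩
  have hsplit : List.range (t + 2 + m) =
      (List.range t ++ [t, t + 1]) ++ (List.range m).map (fun x => t + 2 + x) := by
    rw [List.range_add]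
    congr 1
    rw [show t + 2 = (t+1)+1 by ring, List.range_succ, List.range_succ]
    simp
  rw [hsplit, List.append_assoc, List.filter_append, List.filter_append]
  have htn : t ∉ (List.range t).filter (fun x => x ∉ K) := by
    intro h; have := List.mem_range.1 (List.mem_of_mem_filter h); omega
  have ht1n : t + 1 ∉ (List.range t).filter (fun x => x ∉ K) := by
    intro h; have := List.mem_range.1 (List.mem_of_mem_filter h); omega
  have hfil : ([t, t+1]).filter (fun x => x ∉ K) = [t, t+1] := by
    simp [List.filter_cons, h1, h2]
  rw [List.idxOf_append_of_notMem htn, List.idxOf_append_of_notMem ht1n, hfil]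
  have h0 : ∀ l : List ℕ, List.idxOf t ([t, t+1] ++ l) = 0 := fun l => by
    show List.idxOf t (t :: (t+1) :: l) = 0
    exact List.idxOf_cons_self
  have h1' : ∀ l : List ℕ, List.idxOf (t+1) ([t, t+1] ++ l) = 1 := fun l => by
    show List.idxOf (t+1) (t :: (t+1) :: l) = 1
    rw [List.idxOf_cons_ne _ (by omega), List.idxOf_cons_self]
  rw [h0, h1']
  omega



/-! ### Values -/

/-- exponent of index `j` in instance `t` -/
def expo (n t j : ℕ) : ℤ := if j ≤ t then (j : ℤ) + 1 else (j : ℤ) + 1 - 2 * n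

/-- the value function of instance `t` (on ℕ indices; indices `≥ n` get junk
negative values to make it globally injective) -/
noncomputable def w (n t : ℕ) (B : ℝ) (j : ℕ) : ℝ :=
  if j < n then B ^ (expo n t j) else -(1 : ℝ) - j

lemma expo_le {n t j : ℕ} (ht : t < n) (hj : j < n) (hne : j ≠ t) :
    expo n t j ≤ (t : ℤ) := by
  unfold expo; split <;> omega

lemma expo_self {n t : ℕ} (ht : t < n) : expo n t t = (t : ℤ) + 1 := by
  unfold expo; simp

lemma expo_inj {n t : ℕ} {j j' : ℕ} (hj : j < n) (hj' : j' < n)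
    (h : expo n t j = expo n t j') : j = j' := by
  unfold expo at h; split at h <;> split at h <;> omega

lemma w_pos {n t : ℕ} {B : ℝ} (hB : 1 < B) {j : ℕ} (hj : j < n) : 0 < w n t B j := by
  rw [w, if_pos hj]; exact zpow_pos (by linarith) _

lemma w_inj {n t : ℕ} {B : ℝ} (hB : 1 < B) : Function.Injective (w n t B) := by
  intro a b h
  unfold w at h
  split at h <;> split at h
  · exact expo_inj ‹_› ‹_› (zpow_right_injective₀ (by linarith) (by linarith) h)
  · exfalso; nlinarith [zpow_pos (show (0:ℝ) < B by linarith) (expo n t a), h]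
  · exfalso; nlinarith [zpow_pos (show (0:ℝ) < B by linarith) (expo n t b), h]
  · have : (a : ℝ) = b := by linarith
    exact_mod_cast this

lemma w_self {n t : ℕ} {B : ℝ} (ht : t < n) : w n t B t = B ^ ((t : ℤ) + 1) := by
  rw [w, if_pos ht, expo_self ht]

lemma w_le_of_ne {n t : ℕ} {B : ℝ} (hB : 1 < B) (ht : t < n) {j : ℕ} (hne : j ≠ t) :
    w n t B j ≤ B ^ (t : ℤ) := by
  unfold w
  split
  · exact zpow_le_zpow_right₀ (le_of_lt hB) (expo_le ht ‹_› hne)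
  · have : (0:ℝ) < B ^ (t : ℤ) := zpow_pos (by linarith) _
    have : (0:ℝ) ≤ (j : ℝ) := Nat.cast_nonneg _
    linarith

lemma w_agree {n t : ℕ} {B : ℝ} {j : ℕ} (hne : j ≠ t + 1) :
    w n t B j = w n (t + 1) B j := by
  unfold w expo
  have : (j ≤ t) ↔ (j ≤ t + 1) := by omega
  split <;> [skip; rfl]
  congr 1
  split <;> split <;> omega




/-- sample index list -/
def sampK (n k : ℕ) (π : Equiv.Perm (Fin n)) : List ℕ :=
  ((((List.finRange n).map π).map Fin.val).take k)

lemma permL (n : ℕ) (π : Equiv.Perm (Fin n)) :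
    ((List.finRange n).map π).map Fin.val ~ List.range n := by
  have h1 : (List.finRange n).map π ~ List.finRange n := π.map_finRange_perm
  have := h1.map Fin.val
  rwa [List.map_coe_finRange_eq_range] at this

lemma sampK_subperm (n k : ℕ) (π : Equiv.Perm (Fin n)) :
    sampK n k π <+~ List.range n :=
  ((List.take_sublist _ _).subperm).trans (permL n π).subperm

lemma sampK_length {n k : ℕ} (hk : k ≤ n) (π : Equiv.Perm (Fin n)) :
    (sampK n k π).length = k := by
  simp [sampK, hk]

lemma mem_sampK {n k : ℕ} (hk : k ≤ n) (π : Equiv.Perm (Fin n)) {t : ℕ} (ht : t < n) :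
    t ∈ sampK n k π ↔ ((π.symm ⟨t, ht⟩ : Fin n) : ℕ) < k := by
  constructor
  · intro h
    obtain ⟨i, hi, hK⟩ := List.mem_iff_getElem.1 h
    have hik : i < k := by
      have := hi; simp [sampK] at this; omega
    have hin : i < n := lt_of_lt_of_le hik hk
    have : (((List.finRange n).map π).map Fin.val)[i]'(by simpa using hin) = t := by
      rw [← hK]; simp [sampK]
    simp only [List.getElem_map, List.getElem_finRange] at this
    have hπ : π ⟨i, hin⟩ = ⟨t, ht⟩ := by
      apply Fin.ext; simpa [Fin.cast] using this
    have : π.symm ⟨t, ht⟩ = ⟨i, hin⟩ := by rw [← hπ, Equiv.symm_apply_apply]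
    rw [this]; exact hik
  · intro h
    set i := ((π.symm ⟨t, ht⟩ : Fin n) : ℕ) with hi
    have hin : i < n := (π.symm ⟨t, ht⟩).isLt
    refine List.mem_iff_getElem.2 ⟨i, by simp [sampK, hk]; omega, ?_⟩
    have : (sampK n k π)[i]'(by simp [sampK, hk]; omega) =
        (((List.finRange n).map π).map Fin.val)[i]'(by simpa using hin) := by
      simp [sampK]
    rw [this]
    simp only [List.getElem_map, List.getElem_finRange]
    have hc : ∀ (j : Fin n), (j : ℕ) = i → (π j : ℕ) = t := by
      intro j hj
      have : j = π.symm ⟨t, ht⟩ := by apply Fin.ext; rw [hj, hi]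
      rw [this, Equiv.apply_symm_apply]
    exact hc _ rfl

/-- The actual arrival sequence equals the mapped index list. -/
lemma seq_eq {n k : ℕ} (hk : k ≤ n) (π : Equiv.Perm (Fin n)) (u : ℕ → ℝ)
    (hu : Function.Injective u) :
    ((List.ofFn fun i : Fin n => u ((π i : Fin n) : ℕ)).take k) ++
      ((List.ofFn fun i : Fin n => u (i : ℕ)).diff
        ((List.ofFn fun i : Fin n => u ((π i : Fin n) : ℕ)).take k)) =
      (idxList n (sampK n k π)).map u := by
  have h1 : (List.ofFn fun i : Fin n => u ((π i : Fin n) : ℕ)) =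
      ((((List.finRange n).map π).map Fin.val)).map u := by
    rw [List.ofFn_eq_map]; simp [Function.comp]
  have h2 : (List.ofFn fun i : Fin n => u (i : ℕ)) = (List.range n).map u := by
    rw [List.ofFn_eq_map, ← List.map_coe_finRange_eq_range, List.map_map]; rfl
  have h3 : (List.ofFn fun i : Fin n => u ((π i : Fin n) : ℕ)).take k =
      (sampK n k π).map u := by
    rw [h1, sampK, List.map_take]
  rw [h3, h2, idxList, List.map_append]
  congr 1
  exact (List.map_diff hu).symm


section Core

variable (n k : ℕ) (K : List ℕ) (B : ℝ) (accept : ℕ → List ℝ → ℝ)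

/-- arrival value sequence of instance `t` -/
noncomputable def seqL (t : ℕ) : List ℝ := (idxList n K).map (w n t B)

/-- acceptance probability at position `i` in instance `t` -/
noncomputable def Ak (t i : ℕ) : ℝ := accept k ((seqL n K B t).take (i + 1))

/-- survival probability up to the arrival of index `t` in instance `t` -/
noncomputable def Rk (t : ℕ) : ℝ :=
  ∏ i ∈ Finset.Ico k (pos n K t), (1 - Ak n k K B accept t i)

/-- probability of accepting the maximum in instance `t` -/
noncomputable def Mk (t : ℕ) : ℝ :=
  if t ∈ K then 0 else Ak n k K B accept t (pos n K t) * Rk n k K B accept t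

/-- number of runs started before `T` -/
def starts (T : ℕ) : ℕ :=
  ((Finset.range T).filter (fun u => u ∉ K ∧ (u = 0 ∨ u - 1 ∈ K))).card

variable {n k K B accept}

variable (hacc : ∀ k l, accept k l ∈ Set.Icc (0 : ℝ) 1)

include hacc

lemma Ak_mem (t i : ℕ) : Ak n k K B accept t i ∈ Set.Icc (0 : ℝ) 1 := hacc _ _

lemma Rk_nonneg (t : ℕ) : 0 ≤ Rk n k K B accept t :=
  Finset.prod_nonneg fun i _ => by have := (Ak_mem hacc (n := n) (k := k) (K := K) (B := B) t i).2; linarith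

lemma Rk_le_one (t : ℕ) : Rk n k K B accept t ≤ 1 :=
  Finset.prod_le_one (fun i _ => by have := (Ak_mem hacc (n := n) (k := k) (K := K) (B := B) t i).2; linarith)
    (fun i _ => by have := (Ak_mem hacc (n := n) (k := k) (K := K) (B := B) t i).1; linarith)

lemma Mk_nonneg (t : ℕ) : 0 ≤ Mk n k K B accept t := by
  unfold Mk; split
  · exact le_refl _
  · exact mul_nonneg (Ak_mem hacc (n := n) (k := k) (K := K) (B := B) t _).1 (Rk_nonneg hacc t)

lemma Mk_le_Rk (t : ℕ) (ht : t ∉ K) :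
    Mk n k K B accept t ≤ Rk n k K B accept t := by
  rw [Mk, if_neg ht]
  have h1 := (Ak_mem hacc (n := n) (k := k) (K := K) (B := B) t (pos n K t)).2
  have h0 := Rk_nonneg hacc (n := n) (k := k) (K := K) (B := B) t
  nlinarith

end Core

section Agree

variable {n k : ℕ} {K : List ℕ} {B : ℝ} {accept : ℕ → List ℝ → ℝ}

lemma seq_take_agree (hK : K <+~ List.range n) {t m : ℕ} (ht1 : t + 1 < n)
    (hm : m ≤ pos n K (t + 1)) :
    (seqL n K B t).take m = (seqL n K B (t + 1)).take m := by
  rw [seqL, seqL, ← List.map_take, ← List.map_take]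
  apply List.map_congr_left
  intro a ha
  apply w_agree
  obtain ⟨i, hi, hget⟩ := List.mem_iff_getElem.1 ha
  have hil : i < m := by
    have := hi
    simp only [List.length_take] at this
    omega
  have hin : i < n := by
    have hpn : pos n K (t + 1) < n := pos_lt_n hK ht1
    omega
  intro hcon
  have : (idxList n K)[i]'(by rw [idxList_length hK]; exact hin) = t + 1 := by
    rw [← List.getElem_take]
    · rw [hget, hcon]
    · exact hi
  exact getElem_ne_of_lt_pos hK ht1 hin (by omega) this

lemma Ak_agree (hK : K <+~ List.range n) (hKl : K.length = k) {t i : ℕ} (ht1 : t + 1 < n)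
    (h1 : t ∉ K) (h2 : t + 1 ∉ K) (hi : i ≤ pos n K t) :
    Ak n k K B accept t i = Ak n k K B accept (t + 1) i := by
  unfold Ak
  rw [seq_take_agree hK ht1 (by rw [pos_succ hK hKl ht1 h1 h2]; omega)]

lemma Rk_succ (hK : K <+~ List.range n) (hKl : K.length = k) {t : ℕ} (ht1 : t + 1 < n)
    (h1 : t ∉ K) (h2 : t + 1 ∉ K) :
    Rk n k K B accept (t + 1) =
      Rk n k K B accept t * (1 - Ak n k K B accept t (pos n K t)) := by
  rw [Rk, Rk, pos_succ hK hKl ht1 h1 h2,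
    Finset.prod_Ico_succ_top (le_pos_of_not_mem hKl h1)]
  congr 1
  · apply Finset.prod_congr rfl
    intro i hi
    rw [Finset.mem_Ico] at hi
    rw [Ak_agree hK hKl ht1 h1 h2 (le_of_lt hi.2)]
  · rw [Ak_agree hK hKl ht1 h1 h2 (le_refl _)]

end Agree

section Payoff

variable {n k : ℕ} {K : List ℕ} {B : ℝ} {accept : ℕ → List ℝ → ℝ}

lemma payoff_bound (hK : K <+~ List.range n) (hKl : K.length = k) (hk : k ≤ n)
    (hB : 1 < B) (hacc : ∀ k l, accept k l ∈ Set.Icc (0 : ℝ) 1)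
    {t : ℕ} (ht : t < n) :
    secPayoff accept k (seqL n K B t) ≤
      B ^ ((t : ℤ) + 1) * (Mk n k K B accept t + n / B) := by
  classical
  have hBpos : (0 : ℝ) < B := by linarith
  have hJlen : (idxList n K).length = n := idxList_length hK
  have hslen : (seqL n K B t).length = n := by simp [seqL, hJlen]
  have hd : (0 : ℝ) ≤ B ^ (t : ℤ) := le_of_lt (zpow_pos hBpos _)
  have hgetD : ∀ j (hj : j < n), (seqL n K B t).getD j 0 =
      w n t B ((idxList n K)[j]'(by rw [hJlen]; exact hj)) := by
    intro j hj
    rw [List.getD_eq_getElem _ _ (by rw [hslen]; exact hj)]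
    simp [seqL]
  have hterm : ∀ j ∈ Finset.Ico k n,
      (seqL n K B t).getD j 0 * accept k ((seqL n K B t).take (j + 1)) *
        ∏ i ∈ Finset.Ico k j, (1 - accept k ((seqL n K B t).take (i + 1)))
      ≤ if j = pos n K t ∧ t ∉ K then
          B ^ ((t : ℤ) + 1) * Mk n k K B accept t else B ^ (t : ℤ) := by
    intro j hj
    rw [Finset.mem_Ico] at hj
    by_cases hc : j = pos n K t ∧ t ∉ K
    · rw [if_pos hc]
      obtain ⟨hjp, htK⟩ := hc
      subst hjp
      have hJt : (idxList n K)[pos n K t]'(by rw [hJlen]; exact hj.2) = t := by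
        have := get_pos hK ht
        simpa [List.get_eq_getElem] using this
      rw [hgetD _ hj.2, hJt, w_self ht, Mk, if_neg htK]
      apply le_of_eq
      show B ^ ((t:ℤ)+1) * Ak n k K B accept t (pos n K t) * Rk n k K B accept t = _
      rw [Rk]
      ring
    · rw [if_neg hc]
      have hJne : (idxList n K)[j]'(by rw [hJlen]; exact hj.2) ≠ t := by
        intro hcon
        have hpj : pos n K t = j := by
          have : List.idxOf ((idxList n K)[j]'(by rw [hJlen]; exact hj.2)) (idxList n K) = j := by
            simpa using List.get_idxOf (idxList_nodup hK) ⟨j, (by rw [hJlen]; exact hj.2)⟩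
          rw [hcon] at this
          exact this.symm ▸ rfl
        by_cases htK : t ∈ K
        · have := pos_lt_of_mem hK hKl htK
          omega
        · exact hc ⟨hpj.symm, htK⟩
      have hJmem : (idxList n K)[j]'(by rw [hJlen]; exact hj.2) < n :=
        (mem_idxList hK).1 (List.getElem_mem _)
      have hw : w n t B ((idxList n K)[j]'(by rw [hJlen]; exact hj.2)) ≤ B ^ (t : ℤ) :=
        w_le_of_ne hB ht hJne
      have h0 : 0 ≤ w n t B ((idxList n K)[j]'(by rw [hJlen]; exact hj.2)) :=
        le_of_lt (w_pos hB hJmem)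
      have hA := hacc k ((seqL n K B t).take (j + 1))
      have hP0 : (0:ℝ) ≤ ∏ i ∈ Finset.Ico k j, (1 - accept k ((seqL n K B t).take (i + 1))) :=
        Finset.prod_nonneg fun i _ => by have := (hacc k ((seqL n K B t).take (i+1))).2; linarith
      have hP1 : (∏ i ∈ Finset.Ico k j, (1 - accept k ((seqL n K B t).take (i + 1)))) ≤ 1 :=
        Finset.prod_le_one (fun i _ => by have := (hacc k ((seqL n K B t).take (i+1))).2; linarith)
          (fun i _ => by have := (hacc k ((seqL n K B t).take (i+1))).1; linarith)
      rw [hgetD _ hj.2]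
      calc w n t B _ * accept k ((seqL n K B t).take (j + 1)) *
            ∏ i ∈ Finset.Ico k j, (1 - accept k ((seqL n K B t).take (i + 1)))
          ≤ w n t B _ * accept k ((seqL n K B t).take (j + 1)) * 1 :=
            mul_le_mul_of_nonneg_left hP1 (mul_nonneg h0 hA.1)
        _ = w n t B _ * accept k ((seqL n K B t).take (j + 1)) := mul_one _
        _ ≤ w n t B _ * 1 := mul_le_mul_of_nonneg_left hA.2 h0
        _ = w n t B _ := mul_one _
        _ ≤ B ^ (t : ℤ) := hw
  have hsum : secPayoff accept k (seqL n K B t) ≤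
      ∑ j ∈ Finset.Ico k n, (if j = pos n K t ∧ t ∉ K then
        B ^ ((t : ℤ) + 1) * Mk n k K B accept t else B ^ (t : ℤ)) := by
    rw [secPayoff, hslen]
    exact Finset.sum_le_sum hterm
  have hzp : B ^ ((t : ℤ) + 1) * ((n : ℝ) / B) = n * B ^ (t : ℤ) := by
    rw [zpow_add_one₀ (ne_of_gt hBpos)]
    field_simp
  by_cases htK : t ∈ K
  · have : ∀ j ∈ Finset.Ico k n, (if j = pos n K t ∧ t ∉ K then
        B ^ ((t : ℤ) + 1) * Mk n k K B accept t else B ^ (t : ℤ)) = B ^ (t : ℤ) := by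
      intro j _; rw [if_neg (fun h => h.2 htK)]
    rw [Finset.sum_congr rfl this] at hsum
    rw [Finset.sum_const, Nat.card_Ico] at hsum
    have hMk : Mk n k K B accept t = 0 := by rw [Mk, if_pos htK]
    rw [hMk]
    calc secPayoff accept k (seqL n K B t) ≤ (n - k : ℕ) • B ^ (t:ℤ) := hsum
      _ = ((n - k : ℕ) : ℝ) * B ^ (t:ℤ) := by rw [nsmul_eq_mul]
      _ ≤ (n : ℝ) * B ^ (t:ℤ) := by
          apply mul_le_mul_of_nonneg_right _ hd
          exact_mod_cast Nat.sub_le n k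
      _ = B ^ ((t : ℤ) + 1) * (0 + (n : ℝ) / B) := by rw [zero_add, hzp]
  · have hpmem : pos n K t ∈ Finset.Ico k n :=
      Finset.mem_Ico.2 ⟨le_pos_of_not_mem hKl htK, pos_lt_n hK ht⟩
    have hsplit : ∀ j, (if j = pos n K t ∧ t ∉ K then
          B ^ ((t : ℤ) + 1) * Mk n k K B accept t else B ^ (t : ℤ))
        ≤ (if j = pos n K t then B ^ ((t : ℤ) + 1) * Mk n k K B accept t else 0)
          + B ^ (t : ℤ) := by
      intro j
      by_cases hjp : j = pos n K t
      · rw [if_pos hjp]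
        rw [if_pos ⟨hjp, htK⟩]
        linarith
      · rw [if_neg (fun h => hjp h.1), if_neg hjp]
        linarith [mul_nonneg (le_of_lt (zpow_pos hBpos ((t:ℤ)+1))) (Mk_nonneg hacc (n := n) (k := k) (K := K) (B := B) t)]
    calc secPayoff accept k (seqL n K B t)
        ≤ ∑ j ∈ Finset.Ico k n, (if j = pos n K t ∧ t ∉ K then
            B ^ ((t : ℤ) + 1) * Mk n k K B accept t else B ^ (t : ℤ)) := hsum
      _ ≤ ∑ j ∈ Finset.Ico k n, ((if j = pos n K t then
            B ^ ((t : ℤ) + 1) * Mk n k K B accept t else 0) + B ^ (t : ℤ)) :=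
          Finset.sum_le_sum (fun j _ => hsplit j)
      _ = (∑ j ∈ Finset.Ico k n, (if j = pos n K t then
            B ^ ((t : ℤ) + 1) * Mk n k K B accept t else 0))
          + (n - k : ℕ) • B ^ (t : ℤ) := by
          rw [Finset.sum_add_distrib, Finset.sum_const, Nat.card_Ico]
      _ = B ^ ((t : ℤ) + 1) * Mk n k K B accept t + (n - k : ℕ) • B ^ (t : ℤ) := by
          rw [Finset.sum_ite_eq' _ (pos n K t), if_pos hpmem]
      _ ≤ B ^ ((t : ℤ) + 1) * Mk n k K B accept t + (n : ℝ) * B ^ (t : ℤ) := by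
          rw [nsmul_eq_mul]
          have : ((n - k : ℕ) : ℝ) ≤ (n : ℝ) := by exact_mod_cast Nat.sub_le n k
          have := mul_le_mul_of_nonneg_right this hd
          linarith
      _ = B ^ ((t : ℤ) + 1) * (Mk n k K B accept t + (n : ℝ) / B) := by
          rw [mul_add, hzp]

end Payoff

section CoreInduction

variable {n k : ℕ} {K : List ℕ} {B : ℝ} {accept : ℕ → List ℝ → ℝ}

/-- pending run credit -/
noncomputable def rr (n k : ℕ) (K : List ℕ) (B : ℝ) (accept : ℕ → List ℝ → ℝ) (T : ℕ) : ℝ :=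
  if T < n ∧ T ∉ K ∧ 0 < T ∧ T - 1 ∉ K then Rk n k K B accept T else 0

lemma rr_nonneg (hacc : ∀ k l, accept k l ∈ Set.Icc (0 : ℝ) 1) (T : ℕ) :
    0 ≤ rr n k K B accept T := by
  rw [rr]; split
  · exact Rk_nonneg hacc T
  · exact le_refl _

lemma starts_succ (T : ℕ) : starts K (T + 1) =
    starts K T + (if T ∉ K ∧ (T = 0 ∨ T - 1 ∈ K) then 1 else 0) := by
  rw [starts, starts, Finset.range_add_one, Finset.filter_insert]
  split
  · rw [Finset.card_insert_of_notMem (by simp)]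
  · rw [add_zero]

lemma core_aux (hK : K <+~ List.range n) (hKl : K.length = k)
    (hacc : ∀ k l, accept k l ∈ Set.Icc (0 : ℝ) 1) :
    ∀ T, T ≤ n → ∑ u ∈ Finset.range T, Mk n k K B accept u ≤
      (starts K T : ℝ) - rr n k K B accept T := by
  intro T
  induction T with
  | zero => intro _; simp [starts, rr]
  | succ T ih =>
    intro hT1
    have ihh := ih (by omega)
    rw [Finset.sum_range_succ, starts_succ]
    by_cases htK : T ∈ K
    · have hM : Mk n k K B accept T = 0 := if_pos htK
      have hr1 : rr n k K B accept (T + 1) = 0 := by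
        rw [rr, if_neg]
        rintro ⟨-, -, -, h⟩
        exact h (by simpa using htK)
      have hrT := rr_nonneg (n := n) (k := k) (K := K) (B := B) hacc T
      rw [hM, hr1, if_neg (fun h => h.1 htK)]
      push_cast
      linarith
    · have hMval : Mk n k K B accept T =
          Ak n k K B accept T (pos n K T) * Rk n k K B accept T := if_neg htK
      by_cases hrun : T = 0 ∨ T - 1 ∈ K
      · have hrT0 : rr n k K B accept T = 0 := by
          rw [rr, if_neg]
          rintro ⟨-, -, hpos, hnm⟩
          rcases hrun with h | h
          · omega
          · exact hnm h
        rw [if_pos ⟨htK, hrun⟩]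
        by_cases hnext : T + 1 < n ∧ T + 1 ∉ K
        · have hr1 : rr n k K B accept (T + 1) = Rk n k K B accept (T + 1) := by
            rw [rr, if_pos ⟨hnext.1, hnext.2, by omega, by simpa using htK⟩]
          have hRs := Rk_succ (accept := accept) (B := B) hK hKl hnext.1 htK hnext.2
          have h1 : Mk n k K B accept T + Rk n k K B accept (T + 1) =
              Rk n k K B accept T := by rw [hMval, hRs]; ring
          have hR1 := Rk_le_one (n := n) (k := k) (K := K) (B := B) hacc T
          rw [hr1]
          push_cast
          linarith
        · have hr1 : rr n k K B accept (T + 1) = 0 := by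
            rw [rr, if_neg]
            intro h
            exact hnext ⟨h.1, h.2.1⟩
          have hM1 : Mk n k K B accept T ≤ 1 :=
            le_trans (Mk_le_Rk hacc T htK) (Rk_le_one hacc T)
          have hrT := rr_nonneg (n := n) (k := k) (K := K) (B := B) hacc T
          rw [hr1]
          push_cast
          linarith
      · push_neg at hrun
        have hrT : rr n k K B accept T = Rk n k K B accept T := by
          rw [rr, if_pos ⟨by omega, htK, by omega, hrun.2⟩]
        rw [if_neg (fun h => by
          rcases h.2 with h0 | h1
          · exact hrun.1 h0
          · exact hrun.2 h1)]
        by_cases hnext : T + 1 < n ∧ T + 1 ∉ K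
        · have hr1 : rr n k K B accept (T + 1) = Rk n k K B accept (T + 1) := by
            rw [rr, if_pos ⟨hnext.1, hnext.2, by omega, by simpa using htK⟩]
          have hRs := Rk_succ (accept := accept) (B := B) hK hKl hnext.1 htK hnext.2
          have h1 : Mk n k K B accept T + Rk n k K B accept (T + 1) =
              Rk n k K B accept T := by rw [hMval, hRs]; ring
          rw [hr1]
          push_cast
          linarith [hrT, h1, ihh]
        · have hr1 : rr n k K B accept (T + 1) = 0 := by
            rw [rr, if_neg]
            intro h
            exact hnext ⟨h.1, h.2.1⟩
          have hMR := Mk_le_Rk hacc (n := n) (k := k) (K := K) (B := B) T htK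
          rw [hr1]
          push_cast
          linarith [hrT, hMR, ihh]

lemma core_sum (hK : K <+~ List.range n) (hKl : K.length = k)
    (hacc : ∀ k l, accept k l ∈ Set.Icc (0 : ℝ) 1) :
    ∑ u ∈ Finset.range n, Mk n k K B accept u ≤ (starts K n : ℝ) := by
  have h := core_aux (B := B) hK hKl hacc n (le_refl n)
  have : rr n k K B accept n = 0 := by
    rw [rr, if_neg]; rintro ⟨h, -⟩; omega
  rw [this] at h
  linarith

/-- total normalized payoff bound for a fixed sample `K` -/
lemma total_bound (hK : K <+~ List.range n) (hKl : K.length = k) (hk : k ≤ n)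
    (hB : 1 < B) (hacc : ∀ k l, accept k l ∈ Set.Icc (0 : ℝ) 1) :
    ∑ t ∈ Finset.range n, secPayoff accept k (seqL n K B t) / B ^ ((t : ℤ) + 1)
      ≤ (starts K n : ℝ) + n * (n / B) := by
  have hBpos : (0 : ℝ) < B := by linarith
  have h1 : ∀ t ∈ Finset.range n,
      secPayoff accept k (seqL n K B t) / B ^ ((t : ℤ) + 1) ≤
        Mk n k K B accept t + n / B := by
    intro t htm
    rw [Finset.mem_range] at htm
    rw [div_le_iff₀ (zpow_pos hBpos _)]
    have := payoff_bound hK hKl hk hB hacc htm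
    linarith [this]
  calc ∑ t ∈ Finset.range n, secPayoff accept k (seqL n K B t) / B ^ ((t : ℤ) + 1)
      ≤ ∑ t ∈ Finset.range n, (Mk n k K B accept t + n / B) := Finset.sum_le_sum h1
    _ = (∑ t ∈ Finset.range n, Mk n k K B accept t) + n * (n / B) := by
        rw [Finset.sum_add_distrib, Finset.sum_const, Finset.card_range, nsmul_eq_mul]
    _ ≤ (starts K n : ℝ) + n * (n / B) := by
        linarith [core_sum (B := B) hK hKl hacc]

end CoreInduction

section Counting

lemma exists_perm_two {α : Type*} [DecidableEq α] {a b c d : α} (hab : a ≠ b) (hcd : c ≠ d) :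
    ∃ ρ : Equiv.Perm α, ρ a = c ∧ ρ b = d := by
  refine ⟨(Equiv.swap a c).trans (Equiv.swap ((Equiv.swap a c) b) d), ?_, ?_⟩
  · have h1 : (Equiv.swap a c) a = c := Equiv.swap_apply_left a c
    have h2 : (Equiv.swap a c) b ≠ c := by
      intro h
      have : (Equiv.swap a c) b = (Equiv.swap a c) a := by rw [h, h1]
      exact hab (Equiv.injective _ this).symm
    simp only [Equiv.trans_apply, h1]
    exact Equiv.swap_apply_of_ne_of_ne (fun h => h2 h.symm) hcd
  · simp only [Equiv.trans_apply]
    exact Equiv.swap_apply_left _ _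

lemma fiber_card_pair {n : ℕ} {a b : Fin n} (hab : a ≠ b)
    {c d c' d' : Fin n} (hcd : c ≠ d) (hcd' : c' ≠ d') :
    (Finset.univ.filter (fun σ : Equiv.Perm (Fin n) => σ a = c ∧ σ b = d)).card =
      (Finset.univ.filter (fun σ : Equiv.Perm (Fin n) => σ a = c' ∧ σ b = d')).card := by
  obtain ⟨ρ, hρ1, hρ2⟩ := exists_perm_two hcd hcd'
  refine Finset.card_bij' (fun σ _ => σ.trans ρ) (fun σ _ => σ.trans ρ.symm) ?_ ?_ ?_ ?_
  · intro σ hσ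
    rw [Finset.mem_filter] at hσ ⊢
    refine ⟨Finset.mem_univ _, ?_, ?_⟩
    · simp [Equiv.trans_apply, hσ.2.1, hρ1]
    · simp [Equiv.trans_apply, hσ.2.2, hρ2]
  · intro σ hσ
    rw [Finset.mem_filter] at hσ ⊢
    refine ⟨Finset.mem_univ _, ?_, ?_⟩
    · simp only [Equiv.trans_apply, hσ.2.1]
      rw [← hρ1, Equiv.symm_apply_apply]
    · simp only [Equiv.trans_apply, hσ.2.2]
      rw [← hρ2, Equiv.symm_apply_apply]
  · intro σ _
    ext x
    simp
  · intro σ _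
    ext x
    simp

lemma card_perm_pair {n : ℕ} (hn : 2 ≤ n) {a b : Fin n} (hab : a ≠ b)
    (A B : Finset (Fin n)) (hAB : Disjoint A B) :
    (Finset.univ.filter (fun σ : Equiv.Perm (Fin n) => σ a ∈ A ∧ σ b ∈ B)).card
      = A.card * B.card * Nat.factorial (n - 2) := by
  classical
  set F := (Finset.univ.filter (fun σ : Equiv.Perm (Fin n) => σ a = a ∧ σ b = b)).card with hF
  have hfib : ∀ c d : Fin n, c ≠ d →
      (Finset.univ.filter (fun σ : Equiv.Perm (Fin n) => σ a = c ∧ σ b = d)).card = F :=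
    fun c d hcd => fiber_card_pair hab hcd hab
  -- total count
  have htot : (Finset.univ : Finset (Equiv.Perm (Fin n))).card =
      ∑ p ∈ (Finset.univ : Finset (Fin n)).offDiag,
        ((Finset.univ : Finset (Equiv.Perm (Fin n))).filter
          (fun σ => (σ a, σ b) = p)).card := by
    apply Finset.card_eq_sum_card_fiberwise
    intro σ _
    rw [Finset.mem_coe, Finset.mem_offDiag]
    exact ⟨Finset.mem_univ _, Finset.mem_univ _, fun h => hab (σ.injective h)⟩
  have hfil : ∀ p : Fin n × Fin n,
      ((Finset.univ : Finset (Equiv.Perm (Fin n))).filter (fun σ => (σ a, σ b) = p)) =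
        (Finset.univ.filter (fun σ : Equiv.Perm (Fin n) => σ a = p.1 ∧ σ b = p.2)) := by
    intro p
    apply Finset.filter_congr
    intro σ _
    rw [Prod.ext_iff]
  have htot2 : Nat.factorial n = (n * n - n) * F := by
    have h1 : (Finset.univ : Finset (Equiv.Perm (Fin n))).card = Nat.factorial n := by
      rw [Finset.card_univ, Fintype.card_perm, Fintype.card_fin]
    have h2 : ∀ p ∈ (Finset.univ : Finset (Fin n)).offDiag,
        ((Finset.univ : Finset (Equiv.Perm (Fin n))).filter
          (fun σ => (σ a, σ b) = p)).card = F := by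
      intro p hp
      rw [Finset.mem_offDiag] at hp
      rw [hfil p]
      exact hfib p.1 p.2 hp.2.2
    rw [h1] at htot
    rw [htot, Finset.sum_congr rfl h2, Finset.sum_const, smul_eq_mul,
      Finset.offDiag_card, Finset.card_univ, Fintype.card_fin]
  have hFval : F = Nat.factorial (n - 2) := by
    have hkey : Nat.factorial n = (n * n - n) * Nat.factorial (n - 2) := by
      have h2 : n * n - n = n * (n - 1) := by
        rw [Nat.mul_sub, Nat.mul_one]
      rw [h2]
      obtain ⟨m, rfl⟩ : ∃ m, n = m + 2 := ⟨n - 2, by omega⟩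
      rw [show m + 2 - 1 = m + 1 from rfl, show m + 2 - 2 = m from rfl]
      rw [Nat.factorial_succ, Nat.factorial_succ]
      ring
    have hpos : 0 < n * n - n := by
      have h : n < n * n := by nlinarith
      exact Nat.sub_pos_of_lt h
    exact Nat.eq_of_mul_eq_mul_left hpos (htot2.symm.trans hkey)
  -- now the target
  have htar : (Finset.univ.filter
      (fun σ : Equiv.Perm (Fin n) => σ a ∈ A ∧ σ b ∈ B)).card =
      ∑ p ∈ A ×ˢ B, ((Finset.univ.filter
        (fun σ : Equiv.Perm (Fin n) => σ a ∈ A ∧ σ b ∈ B)).filter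
          (fun σ => (σ a, σ b) = p)).card := by
    apply Finset.card_eq_sum_card_fiberwise
    intro σ hσ
    rw [Finset.mem_coe, Finset.mem_filter] at hσ
    exact Finset.mem_product.2 ⟨hσ.2.1, hσ.2.2⟩
  have hfil2 : ∀ p ∈ A ×ˢ B,
      ((Finset.univ.filter (fun σ : Equiv.Perm (Fin n) => σ a ∈ A ∧ σ b ∈ B)).filter
        (fun σ => (σ a, σ b) = p)).card = F := by
    intro p hp
    rw [Finset.mem_product] at hp
    have : ((Finset.univ.filter (fun σ : Equiv.Perm (Fin n) => σ a ∈ A ∧ σ b ∈ B)).filter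
        (fun σ => (σ a, σ b) = p)) =
        (Finset.univ.filter (fun σ : Equiv.Perm (Fin n) => σ a = p.1 ∧ σ b = p.2)) := by
      ext σ
      simp only [Finset.mem_filter, Finset.mem_univ, true_and, Prod.ext_iff]
      constructor
      · rintro ⟨-, h⟩; exact h
      · rintro ⟨h1, h2⟩
        exact ⟨⟨h1 ▸ hp.1, h2 ▸ hp.2⟩, h1, h2⟩
    rw [this]
    apply hfib
    intro h
    exact (Finset.disjoint_left.1 hAB) (h ▸ hp.1) hp.2
  rw [htar, Finset.sum_congr rfl hfil2, Finset.sum_const, smul_eq_mul,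
    Finset.card_product, hFval]

lemma card_perm_single {n : ℕ} (hn : 1 ≤ n) (a : Fin n) (A : Finset (Fin n)) :
    (Finset.univ.filter (fun σ : Equiv.Perm (Fin n) => σ a ∈ A)).card
      = A.card * Nat.factorial (n - 1) := by
  classical
  set F := (Finset.univ.filter (fun σ : Equiv.Perm (Fin n) => σ a = a)).card with hF
  have hfib : ∀ c : Fin n,
      (Finset.univ.filter (fun σ : Equiv.Perm (Fin n) => σ a = c)).card = F := by
    intro c
    refine Finset.card_bij' (fun σ _ => σ.trans (Equiv.swap c a)) (fun σ _ => σ.trans (Equiv.swap c a).symm) ?_ ?_ ?_ ?_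
    · intro σ hσ
      rw [Finset.mem_filter] at hσ ⊢
      refine ⟨Finset.mem_univ _, ?_⟩
      simp [Equiv.trans_apply, hσ.2]
    · intro σ hσ
      rw [Finset.mem_filter] at hσ ⊢
      refine ⟨Finset.mem_univ _, ?_⟩
      simp [Equiv.trans_apply, hσ.2]
    · intro σ _; ext x; simp
    · intro σ _; ext x; simp
  have htot : (Finset.univ : Finset (Equiv.Perm (Fin n))).card =
      ∑ c ∈ (Finset.univ : Finset (Fin n)),
        ((Finset.univ : Finset (Equiv.Perm (Fin n))).filter (fun σ => σ a = c)).card :=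
    Finset.card_eq_sum_card_fiberwise (fun σ _ => Finset.mem_univ _)
  have htot2 : Nat.factorial n = n * F := by
    have h1 : (Finset.univ : Finset (Equiv.Perm (Fin n))).card = Nat.factorial n := by
      rw [Finset.card_univ, Fintype.card_perm, Fintype.card_fin]
    rw [h1] at htot
    rw [htot, Finset.sum_congr rfl (fun c _ => hfib c), Finset.sum_const, smul_eq_mul,
      Finset.card_univ, Fintype.card_fin]
  have hFval : F = Nat.factorial (n - 1) := by
    have hkey : Nat.factorial n = n * Nat.factorial (n - 1) := by
      obtain ⟨m, rfl⟩ : ∃ m, n = m + 1 := ⟨n - 1, by omega⟩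
      rw [show m + 1 - 1 = m from rfl, Nat.factorial_succ]
    exact Nat.eq_of_mul_eq_mul_left (show 0 < n by omega) (htot2.symm.trans hkey)
  have htar : (Finset.univ.filter (fun σ : Equiv.Perm (Fin n) => σ a ∈ A)).card =
      ∑ c ∈ A, ((Finset.univ.filter (fun σ : Equiv.Perm (Fin n) => σ a ∈ A)).filter
        (fun σ => σ a = c)).card := by
    apply Finset.card_eq_sum_card_fiberwise
    intro σ hσ
    rw [Finset.mem_coe, Finset.mem_filter] at hσ
    exact hσ.2
  have hfil2 : ∀ c ∈ A,
      ((Finset.univ.filter (fun σ : Equiv.Perm (Fin n) => σ a ∈ A)).filter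
        (fun σ => σ a = c)).card = F := by
    intro c hc
    have : ((Finset.univ.filter (fun σ : Equiv.Perm (Fin n) => σ a ∈ A)).filter
        (fun σ => σ a = c)) = (Finset.univ.filter (fun σ : Equiv.Perm (Fin n) => σ a = c)) := by
      ext σ
      simp only [Finset.mem_filter, Finset.mem_univ, true_and]
      constructor
      · rintro ⟨-, h⟩; exact h
      · intro h; exact ⟨h ▸ hc, h⟩
    rw [this, hfib]
  rw [htar, Finset.sum_congr rfl hfil2, Finset.sum_const, smul_eq_mul, hFval]

end Counting

section StartsSum

lemma card_filter_perm_symm {n : ℕ} (p : Equiv.Perm (Fin n) → Prop) [DecidablePred p] :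
    (Finset.univ.filter (fun π : Equiv.Perm (Fin n) => p π.symm)).card =
      (Finset.univ.filter p).card := by
  refine Finset.card_bij' (fun π _ => π.symm) (fun σ _ => σ.symm) ?_ ?_ ?_ ?_
  · intro π hπ
    rw [Finset.mem_filter] at hπ ⊢
    exact ⟨Finset.mem_univ _, hπ.2⟩
  · intro σ hσ
    rw [Finset.mem_filter] at hσ ⊢
    refine ⟨Finset.mem_univ _, ?_⟩
    simpa using hσ.2
  · intro π _; simp
  · intro σ _; simp

lemma card_low {n k : ℕ} (hk : k ≤ n) :
    (Finset.univ.filter (fun x : Fin n => x.val < k)).card = k := by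
  have key : (Finset.univ.filter (fun x : Fin n => x.val < k)).card =
      (Finset.univ : Finset (Fin k)).card := by
    refine Finset.card_bij' (fun x hx => ⟨x.val, by
      rw [Finset.mem_filter] at hx; exact hx.2⟩)
      (fun (y : Fin k) _ => ⟨y.val, lt_of_lt_of_le y.isLt hk⟩) ?_ ?_ ?_ ?_
    · intro x hx; exact Finset.mem_univ _
    · intro y hy
      rw [Finset.mem_filter]
      exact ⟨Finset.mem_univ _, y.isLt⟩
    · intro x hx; rfl
    · intro y hy; rfl
  rw [key, Finset.card_univ, Fintype.card_fin]

lemma card_high {n k : ℕ} (hk : k ≤ n) :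
    (Finset.univ.filter (fun x : Fin n => k ≤ x.val)).card = n - k := by
  have h := Finset.card_filter_add_card_filter_not
    (s := (Finset.univ : Finset (Fin n))) (p := fun x : Fin n => x.val < k)
  rw [Finset.card_univ, Fintype.card_fin, card_low hk] at h
  have h2 : (Finset.univ.filter (fun x : Fin n => ¬ x.val < k)) =
      (Finset.univ.filter (fun x : Fin n => k ≤ x.val)) := by
    apply Finset.filter_congr; intro x _; simp [Nat.not_lt]
  rw [h2] at h
  omega

lemma starts_sum {n k : ℕ} (hn : 2 ≤ n) (hk : k ≤ n) :
    ∑ π : Equiv.Perm (Fin n), starts (sampK n k π) n ≤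
      (k + 1) * (n - k) * Nat.factorial (n - 1) := by
  classical
  have hstep : ∀ π : Equiv.Perm (Fin n), starts (sampK n k π) n =
      ∑ t ∈ Finset.range n,
        if (t ∉ sampK n k π ∧ (t = 0 ∨ t - 1 ∈ sampK n k π)) then 1 else 0 := by
    intro π
    rw [starts, Finset.card_filter]
  rw [Finset.sum_congr rfl (fun π _ => hstep π), Finset.sum_comm]
  have h0 : (0:ℕ) < n := by omega
  -- value for t = 0
  have ht0 : (∑ π : Equiv.Perm (Fin n),
      if ((0:ℕ) ∉ sampK n k π ∧ ((0:ℕ) = 0 ∨ (0:ℕ) - 1 ∈ sampK n k π)) then 1 else 0) =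
      (n - k) * Nat.factorial (n - 1) := by
    have e1 : (∑ π : Equiv.Perm (Fin n),
        if ((0:ℕ) ∉ sampK n k π ∧ ((0:ℕ) = 0 ∨ (0:ℕ) - 1 ∈ sampK n k π)) then 1 else 0) =
        (Finset.univ.filter (fun π : Equiv.Perm (Fin n) =>
          π.symm ⟨0, h0⟩ ∈ Finset.univ.filter (fun x : Fin n => k ≤ x.val))).card := by
      rw [Finset.card_filter]
      apply Finset.sum_congr rfl
      intro π _
      congr 1
      rw [eq_iff_iff]
      constructor
      · rintro ⟨hmem, -⟩
        rw [Finset.mem_filter]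
        refine ⟨Finset.mem_univ _, ?_⟩
        by_contra hcon
        exact hmem ((mem_sampK hk π h0).2 (by omega))
      · intro hmem
        rw [Finset.mem_filter] at hmem
        refine ⟨fun hc => ?_, Or.inl rfl⟩
        have := (mem_sampK hk π h0).1 hc
        omega
    rw [e1, card_filter_perm_symm (fun σ => σ ⟨0, h0⟩ ∈
        Finset.univ.filter (fun x : Fin n => k ≤ x.val)),
      card_perm_single (by omega) _ _, card_high hk]
  -- value for 1 ≤ t < n
  have ht1 : ∀ t, 1 ≤ t → t < n → (∑ π : Equiv.Perm (Fin n),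
      if (t ∉ sampK n k π ∧ (t = 0 ∨ t - 1 ∈ sampK n k π)) then 1 else 0) =
      (n - k) * k * Nat.factorial (n - 2) := by
    intro t ht1' htn
    have htn' : t - 1 < n := by omega
    have e1 : (∑ π : Equiv.Perm (Fin n),
        if (t ∉ sampK n k π ∧ (t = 0 ∨ t - 1 ∈ sampK n k π)) then 1 else 0) =
        (Finset.univ.filter (fun π : Equiv.Perm (Fin n) =>
          π.symm ⟨t, htn⟩ ∈ Finset.univ.filter (fun x : Fin n => k ≤ x.val) ∧
          π.symm ⟨t - 1, htn'⟩ ∈ Finset.univ.filter (fun x : Fin n => x.val < k))).card := by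
      rw [Finset.card_filter]
      apply Finset.sum_congr rfl
      intro π _
      congr 1
      rw [eq_iff_iff]
      constructor
      · rintro ⟨hmem, hor⟩
        have hor' : t - 1 ∈ sampK n k π := by
          rcases hor with h | h
          · omega
          · exact h
        constructor
        · rw [Finset.mem_filter]
          refine ⟨Finset.mem_univ _, ?_⟩
          by_contra hcon
          exact hmem ((mem_sampK hk π htn).2 (by omega))
        · rw [Finset.mem_filter]
          exact ⟨Finset.mem_univ _, (mem_sampK hk π htn').1 hor'⟩
      · rintro ⟨hm1, hm2⟩
        rw [Finset.mem_filter] at hm1 hm2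
        constructor
        · intro hc
          have := (mem_sampK hk π htn).1 hc
          omega
        · exact Or.inr ((mem_sampK hk π htn').2 hm2.2)
    rw [e1, card_filter_perm_symm (fun σ : Equiv.Perm (Fin n) =>
        σ ⟨t, htn⟩ ∈ Finset.univ.filter (fun x : Fin n => k ≤ x.val) ∧
        σ ⟨t - 1, htn'⟩ ∈ Finset.univ.filter (fun x : Fin n => x.val < k))]
    rw [card_perm_pair hn (a := ⟨t, htn⟩) (b := ⟨t - 1, htn'⟩)
      (by intro h; rw [Fin.ext_iff] at h; simp at h; omega) _ _
      (by
        rw [Finset.disjoint_left]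
        intro x hx1 hx2
        rw [Finset.mem_filter] at hx1 hx2
        omega)]
    rw [card_high hk, card_low hk]
  -- assemble
  have hsplit : ∑ t ∈ Finset.range n, (∑ π : Equiv.Perm (Fin n),
      if (t ∉ sampK n k π ∧ (t = 0 ∨ t - 1 ∈ sampK n k π)) then 1 else 0) =
      (n - k) * Nat.factorial (n - 1) +
        ∑ t ∈ Finset.Ico 1 n, (∑ π : Equiv.Perm (Fin n),
          if (t ∉ sampK n k π ∧ (t = 0 ∨ t - 1 ∈ sampK n k π)) then 1 else 0) := by
    rw [Finset.range_eq_Ico, Finset.sum_eq_sum_Ico_succ_bot h0, ht0]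
  rw [hsplit]
  have hconst : ∑ t ∈ Finset.Ico 1 n, (∑ π : Equiv.Perm (Fin n),
      if (t ∉ sampK n k π ∧ (t = 0 ∨ t - 1 ∈ sampK n k π)) then 1 else 0) =
      (n - 1) * ((n - k) * k * Nat.factorial (n - 2)) := by
    calc ∑ t ∈ Finset.Ico 1 n, (∑ π : Equiv.Perm (Fin n),
        if (t ∉ sampK n k π ∧ (t = 0 ∨ t - 1 ∈ sampK n k π)) then 1 else 0)
        = ∑ _t ∈ Finset.Ico 1 n, (n - k) * k * Nat.factorial (n - 2) :=
          Finset.sum_congr rfl (fun t ht => by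
            rw [Finset.mem_Ico] at ht
            exact ht1 t ht.1 ht.2)
      _ = (n - 1) * ((n - k) * k * Nat.factorial (n - 2)) := by
          rw [Finset.sum_const, Nat.card_Ico, smul_eq_mul]
  rw [hconst]
  have hfac : (n - 1) * Nat.factorial (n - 2) = Nat.factorial (n - 1) := by
    obtain ⟨m, rfl⟩ : ∃ m, n = m + 2 := ⟨n - 2, by omega⟩
    rw [show m + 2 - 1 = m + 1 from rfl, show m + 2 - 2 = m from rfl]
    rw [Nat.factorial_succ]
  calc (n - k) * Nat.factorial (n - 1) + (n - 1) * ((n - k) * k * Nat.factorial (n - 2))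
      = (n - k) * Nat.factorial (n - 1) + k * (n - k) * ((n - 1) * Nat.factorial (n - 2)) := by
        ring
    _ = (n - k) * Nat.factorial (n - 1) + k * (n - k) * Nat.factorial (n - 1) := by rw [hfac]
    _ = (k + 1) * (n - k) * Nat.factorial (n - 1) := by ring
    _ ≤ (k + 1) * (n - k) * Nat.factorial (n - 1) := le_refl _

end StartsSum

end Stmt8

/-- Any order-oblivious online algorithm for the secretary problem on
`n` elements — given by a (possibly random) sampling-phase length `k` with distribution
`μ`, and acceptance probabilities `accept` in `[0,1]` — has competitive ratio at most
`(1/4)(1 + 5/(n-1))`: there exist `n` positive values `v` and an adversarial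
order rule `τ` for the elements remaining after the (uniformly random) sampling phase,
such that the expected accepted value is at most `(1/4)(1 + 5/(n-1))` times the maximum
value. -/
theorem stmt8 (n : ℕ) (hn : 2 ≤ n)
    (μ : ℕ → ℝ) (hμ0 : ∀ k, 0 ≤ μ k) (hμ1 : ∑ k ∈ Finset.range (n + 1), μ k = 1)
    (accept : ℕ → List ℝ → ℝ) (hacc : ∀ k l, accept k l ∈ Set.Icc (0 : ℝ) 1) :
    ∃ v : Fin n → ℝ, (∀ i, 0 < v i) ∧
      ∃ τ : ℕ → List ℝ → List ℝ,
        (∀ k : ℕ, k ≤ n → ∀ π : Equiv.Perm (Fin n),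
          (((List.ofFn fun i => v (π i)).take k) ++
              τ k ((List.ofFn fun i => v (π i)).take k)).Perm (List.ofFn v)) ∧
        ∃ imax : Fin n, (∀ i, v i ≤ v imax) ∧
          (∑ k ∈ Finset.range (n + 1), μ k *
              ((∑ π : Equiv.Perm (Fin n),
                  secPayoff accept k
                    (((List.ofFn fun i => v (π i)).take k) ++
                      τ k ((List.ofFn fun i => v (π i)).take k))) /
                (Nat.factorial n : ℝ)))
            ≤ (1 / 4) * (1 + 5 / ((n : ℝ) - 1)) * v imax := by
  classical
  set B : ℝ := 2 * (n : ℝ) ^ 2 with hBdef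
  have hnR : (2 : ℝ) ≤ (n : ℝ) := by exact_mod_cast hn
  have hB : 1 < B := by rw [hBdef]; nlinarith
  have hBpos : (0 : ℝ) < B := by linarith
  set Nf : ℝ := (Nat.factorial n : ℝ) with hNfdef
  have hNfpos : 0 < Nf := by
    rw [hNfdef]; exact_mod_cast Nat.factorial_pos n
  have hNf : Nf = n * (Nat.factorial (n - 1) : ℝ) := by
    obtain ⟨m, rfl⟩ : ∃ m, n = m + 1 := ⟨n - 1, by omega⟩
    rw [hNfdef, show m + 1 - 1 = m from rfl, Nat.factorial_succ]
    push_cast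
    ring
  set bound : ℝ := (1 / 4) * (1 + 5 / ((n : ℝ) - 1)) with hbounddef
  set X : ℝ := ((n : ℝ) + 1) ^ 2 / (4 * n) + (n : ℝ) ^ 2 / B with hXdef
  -- the payoff of instance t
  set Q : ℕ → ℝ := fun t => ∑ k ∈ Finset.range (n + 1), μ k *
    ((∑ π : Equiv.Perm (Fin n),
      secPayoff accept k (Stmt8.seqL n (Stmt8.sampK n k π) B t)) / Nf) with hQdef
  -- step: per-k bound
  have hkey : ∀ k ∈ Finset.range (n + 1),
      ∑ t ∈ Finset.range n,
        (∑ π : Equiv.Perm (Fin n),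
          secPayoff accept k (Stmt8.seqL n (Stmt8.sampK n k π) B t)) / B ^ ((t : ℤ) + 1)
      ≤ ((k + 1) * (n - k) * Nat.factorial (n - 1) : ℕ) + Nf * ((n : ℝ) * ((n : ℝ) / B)) := by
    intro k hkr
    rw [Finset.mem_range] at hkr
    have hk : k ≤ n := by omega
    have hsw : ∑ t ∈ Finset.range n,
        (∑ π : Equiv.Perm (Fin n),
          secPayoff accept k (Stmt8.seqL n (Stmt8.sampK n k π) B t)) / B ^ ((t : ℤ) + 1)
        = ∑ π : Equiv.Perm (Fin n), ∑ t ∈ Finset.range n,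
            secPayoff accept k (Stmt8.seqL n (Stmt8.sampK n k π) B t) / B ^ ((t : ℤ) + 1) := by
      rw [Finset.sum_comm]
      apply Finset.sum_congr rfl
      intro π _
      rw [Finset.sum_div]
    rw [hsw]
    have hπb : ∀ π : Equiv.Perm (Fin n),
        ∑ t ∈ Finset.range n,
          secPayoff accept k (Stmt8.seqL n (Stmt8.sampK n k π) B t) / B ^ ((t : ℤ) + 1)
        ≤ (Stmt8.starts (Stmt8.sampK n k π) n : ℝ) + n * (n / B) := by
      intro π
      exact Stmt8.total_bound (Stmt8.sampK_subperm n k π) (Stmt8.sampK_length hk π) hk hB hacc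
    calc ∑ π : Equiv.Perm (Fin n), ∑ t ∈ Finset.range n,
          secPayoff accept k (Stmt8.seqL n (Stmt8.sampK n k π) B t) / B ^ ((t : ℤ) + 1)
        ≤ ∑ π : Equiv.Perm (Fin n),
            ((Stmt8.starts (Stmt8.sampK n k π) n : ℝ) + n * (n / B)) :=
          Finset.sum_le_sum (fun π _ => hπb π)
      _ = (∑ π : Equiv.Perm (Fin n), (Stmt8.starts (Stmt8.sampK n k π) n : ℝ))
            + Nf * ((n : ℝ) * ((n : ℝ) / B)) := by
          rw [Finset.sum_add_distrib, Finset.sum_const, Finset.card_univ,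
            Fintype.card_perm, Fintype.card_fin, nsmul_eq_mul, hNfdef]
      _ ≤ ((k + 1) * (n - k) * Nat.factorial (n - 1) : ℕ) + Nf * ((n : ℝ) * ((n : ℝ) / B)) := by
          have := Stmt8.starts_sum (n := n) (k := k) hn hk
          have hcast : (∑ π : Equiv.Perm (Fin n), (Stmt8.starts (Stmt8.sampK n k π) n : ℝ))
              = ((∑ π : Equiv.Perm (Fin n), Stmt8.starts (Stmt8.sampK n k π) n : ℕ) : ℝ) := by
            push_cast
            rfl
          rw [hcast]
          have h2 : ((∑ π : Equiv.Perm (Fin n), Stmt8.starts (Stmt8.sampK n k π) n : ℕ) : ℝ)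
              ≤ (((k + 1) * (n - k) * Nat.factorial (n - 1) : ℕ) : ℝ) := by
            exact_mod_cast this
          linarith
  -- step: averaged bound
  have havg : ∑ t ∈ Finset.range n, Q t / B ^ ((t : ℤ) + 1) ≤ X := by
    have hswap : ∑ t ∈ Finset.range n, Q t / B ^ ((t : ℤ) + 1)
        = ∑ k ∈ Finset.range (n + 1), μ k *
            ((∑ t ∈ Finset.range n,
              (∑ π : Equiv.Perm (Fin n),
                secPayoff accept k (Stmt8.seqL n (Stmt8.sampK n k π) B t)) / B ^ ((t : ℤ) + 1)) / Nf) := by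
      have hgen : ∀ (a s c d : ℝ), (a * (s / c)) / d = a * ((s / d) / c) := by
        intro a s c d
        rw [mul_div_assoc, div_div, mul_comm c d, ← div_div]
      have e1 : ∑ t ∈ Finset.range n, Q t / B ^ ((t : ℤ) + 1)
          = ∑ t ∈ Finset.range n, ∑ k ∈ Finset.range (n + 1),
              (μ k * ((∑ π : Equiv.Perm (Fin n),
                secPayoff accept k (Stmt8.seqL n (Stmt8.sampK n k π) B t)) / Nf)) / B ^ ((t : ℤ) + 1) := by
        apply Finset.sum_congr rfl
        intro t _
        rw [hQdef, Finset.sum_div]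
      rw [e1, Finset.sum_comm]
      apply Finset.sum_congr rfl
      intro k _
      rw [Finset.sum_div, Finset.mul_sum]
      apply Finset.sum_congr rfl
      intro t _
      exact hgen _ _ _ _
    rw [hswap]
    have hterm : ∀ k ∈ Finset.range (n + 1), μ k *
        ((∑ t ∈ Finset.range n,
          (∑ π : Equiv.Perm (Fin n),
            secPayoff accept k (Stmt8.seqL n (Stmt8.sampK n k π) B t)) / B ^ ((t : ℤ) + 1)) / Nf)
        ≤ μ k * X := by
      intro k hkr
      apply mul_le_mul_of_nonneg_left _ (hμ0 k)
      rw [div_le_iff₀ hNfpos]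
      refine le_trans (hkey k hkr) ?_
      rw [Finset.mem_range] at hkr
      have hk : k ≤ n := by omega
      have hfc : (((k + 1) * (n - k) * Nat.factorial (n - 1) : ℕ) : ℝ)
          = ((k : ℝ) + 1) * ((n : ℝ) - k) * (Nat.factorial (n - 1) : ℝ) := by
        push_cast [Nat.cast_sub hk]
        ring
      have hamgm : ((k : ℝ) + 1) * ((n : ℝ) - k) ≤ ((n : ℝ) + 1) ^ 2 / 4 := by
        nlinarith [sq_nonneg ((n : ℝ) - 2 * k - 1)]
      have hfacpos : (0 : ℝ) < (Nat.factorial (n - 1) : ℝ) := by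
        exact_mod_cast Nat.factorial_pos (n - 1)
      have hXexp : X * Nf = ((n : ℝ) + 1) ^ 2 / 4 * (Nat.factorial (n - 1) : ℝ)
          + (n : ℝ) ^ 2 / B * Nf := by
        rw [hXdef, add_mul, hNf]
        have hn0 : (0 : ℝ) < (n : ℝ) := by linarith
        field_simp
      rw [hfc, hXexp]
      have h1 : ((k : ℝ) + 1) * ((n : ℝ) - k) * (Nat.factorial (n - 1) : ℝ)
          ≤ ((n : ℝ) + 1) ^ 2 / 4 * (Nat.factorial (n - 1) : ℝ) :=
        mul_le_mul_of_nonneg_right hamgm (le_of_lt hfacpos)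
      have h2 : Nf * ((n : ℝ) * ((n : ℝ) / B)) = (n : ℝ) ^ 2 / B * Nf := by ring
      linarith
    calc ∑ k ∈ Finset.range (n + 1), μ k *
          ((∑ t ∈ Finset.range n,
            (∑ π : Equiv.Perm (Fin n),
              secPayoff accept k (Stmt8.seqL n (Stmt8.sampK n k π) B t)) / B ^ ((t : ℤ) + 1)) / Nf)
        ≤ ∑ k ∈ Finset.range (n + 1), μ k * X := Finset.sum_le_sum hterm
      _ = X := by rw [← Finset.sum_mul, hμ1, one_mul]
  -- step: X ≤ n * bound
  have hXb : X ≤ (n : ℝ) * bound := by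
    rw [hXdef, hbounddef, hBdef]
    have hn0 : (0 : ℝ) < (n : ℝ) := by linarith
    have hn1 : (0 : ℝ) < (n : ℝ) - 1 := by linarith
    rw [div_add_div _ _ (by positivity) (by positivity)]
    rw [div_le_iff₀ (by positivity)]
    have hexp : (n : ℝ) * ((1 : ℝ) / 4 * (1 + 5 / ((n : ℝ) - 1))) * (4 * n * (2 * n ^ 2))
        = 2 * (n : ℝ) ^ 4 + 10 * (n : ℝ) ^ 4 / ((n : ℝ) - 1) := by
      field_simp
      ring
    rw [hexp]
    have h10 : 10 * (n : ℝ) ^ 4 / ((n : ℝ) - 1) ≥ 10 * (n : ℝ) ^ 3 := by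
      rw [ge_iff_le, le_div_iff₀ hn1]
      nlinarith
    nlinarith [sq_nonneg ((n:ℝ) - 1), sq_nonneg (n:ℝ)]
  -- extract a good instance t
  have hex : ∃ t ∈ Finset.range n, Q t / B ^ ((t : ℤ) + 1) ≤ bound := by
    have hsum2 : ∑ t ∈ Finset.range n, Q t / B ^ ((t : ℤ) + 1)
        ≤ ∑ _t ∈ Finset.range n, bound := by
      rw [Finset.sum_const, Finset.card_range, nsmul_eq_mul]
      exact le_trans havg hXb
    exact Finset.exists_le_of_sum_le ⟨0, Finset.mem_range.2 (by omega)⟩ hsum2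
  obtain ⟨t, htr, hQt⟩ := hex
  rw [Finset.mem_range] at htr
  -- define the instance
  refine ⟨fun i => Stmt8.w n t B i.val, ?_, ?_⟩
  · intro i
    exact Stmt8.w_pos hB i.isLt
  refine ⟨fun k l => (List.ofFn fun i : Fin n => Stmt8.w n t B i.val).diff l, ?_, ?_⟩
  · intro k hk π
    rw [Stmt8.seq_eq hk π (Stmt8.w n t B) (Stmt8.w_inj hB)]
    have h2 : (List.ofFn fun i : Fin n => Stmt8.w n t B (i : ℕ)) =
        (List.range n).map (Stmt8.w n t B) := by
      rw [List.ofFn_eq_map, ← List.map_coe_finRange_eq_range, List.map_map]; rfl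
    rw [h2]
    exact (Stmt8.idxList_perm (Stmt8.sampK_subperm n k π)).map _
  refine ⟨⟨t, htr⟩, ?_, ?_⟩
  · intro i
    show Stmt8.w n t B i.val ≤ Stmt8.w n t B t
    rw [Stmt8.w_self htr]
    by_cases hit : i.val = t
    · rw [hit, Stmt8.w_self htr]
    · calc Stmt8.w n t B i.val ≤ B ^ (t : ℤ) := Stmt8.w_le_of_ne hB htr hit
        _ ≤ B ^ ((t : ℤ) + 1) := zpow_le_zpow_right₀ (le_of_lt hB) (by omega)
  · have hQeq : (∑ k ∈ Finset.range (n + 1), μ k *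
        ((∑ π : Equiv.Perm (Fin n),
          secPayoff accept k
            (((List.ofFn fun i => Stmt8.w n t B ((π i : Fin n) : ℕ)).take k) ++
              (List.ofFn fun i : Fin n => Stmt8.w n t B i.val).diff
                ((List.ofFn fun i => Stmt8.w n t B ((π i : Fin n) : ℕ)).take k))) / Nf))
        = Q t := by
      rw [hQdef]
      apply Finset.sum_congr rfl
      intro k hkr
      rw [Finset.mem_range] at hkr
      congr 1
      congr 1
      apply Finset.sum_congr rfl
      intro π _
      congr 1
      exact Stmt8.seq_eq (by omega) π (Stmt8.w n t B) (Stmt8.w_inj hB)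
    show (∑ k ∈ Finset.range (n + 1), μ k * (_ / Nf)) ≤ bound * Stmt8.w n t B t
    rw [hQeq, Stmt8.w_self htr]
    rw [div_le_iff₀ (zpow_pos hBpos _)] at hQt
    linarith
end
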